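/- arXiv:1907.04826 — 6 statements merged into one kernel-verified Lean document; each statement's English description precedes it below -/
import Mathlib

section
/- For all positive integers N and k with N ≥ 2k², the binomial coefficients satisfy C(2N−k, N−k) / C(2N, N) ≥ 2^{−k−1}. -/
theorem choose_two_mul_sub_succ_mul {N j : ℕ} (hj : j < N) :
    ((2 * N - (j + 1)).choose (N - (j + 1)) : ℚ) * (2 * N - j) =
      (2 * N - j).choose (N - j) * (N - j) := by
  have h := Nat.add_one_mul_choose_eq (2 * N - (j + 1)) (N - (j + 1))
  rw [show 2 * N - (j + 1) + 1 = 2 * N - j by omega,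
    show N - (j + 1) + 1 = N - j by omega] at h
  have hQ := congrArg (Nat.cast : ℕ → ℚ) h
  push_cast [Nat.cast_sub (show j ≤ 2 * N by omega), Nat.cast_sub hj.le] at hQ
  linarith

/- After multiplying by `2N - j`, the step `j → j + 1` comes down to
`2 (N - j) (2k - j) - (2k - j - 1) (2N - j) = 2N - j (2k - j + 1) ≥ 0`. -/
theorem centralBinom_mul_le_two_pow_mul_choose {N k j : ℕ} (hNk : k * (k + 1) ≤ 2 * N)
    (hj : j ≤ k) :
    ((2 * N).choose N : ℚ) * (2 * k - j) ≤ 2 ^ j * (2 * k) * (2 * N - j).choose (N - j) := by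
  induction j with
  | zero => simp [mul_comm]
  | succ j ih =>
    have hjN : j < N := by nlinarith
    have hjQ : (j : ℚ) < N := by exact_mod_cast hjN
    have hjk : (j : ℚ) ≤ k := by exact_mod_cast (Nat.le_of_succ_le hj)
    have hNkQ : (k : ℚ) * (k + 1) ≤ 2 * N := by exact_mod_cast hNk
    have hdefect : (j : ℚ) * (2 * k - j + 1) ≤ 2 * N := by nlinarith [sq_nonneg ((k : ℚ) - j)]
    have hpos : (0 : ℚ) < 2 * N - j := by linarith
    have hC : (0 : ℚ) ≤ (2 * N).choose N := by positivity
    refine le_of_mul_le_mul_right ?_ hpos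
    calc ((2 * N).choose N : ℚ) * (2 * k - (j + 1 : ℕ)) * (2 * N - j)
        ≤ (2 * N).choose N * (2 * k - j) * (2 * (N - j)) := by
          push_cast
          nlinarith [mul_nonneg hC (sub_nonneg.mpr hdefect)]
      _ ≤ 2 ^ j * (2 * k) * (2 * N - j).choose (N - j) * (2 * (N - j)) := by
          exact mul_le_mul_of_nonneg_right (ih (Nat.le_of_succ_le hj)) (by linarith)
      _ = 2 ^ (j + 1) * (2 * k) * (2 * N - (j + 1)).choose (N - (j + 1)) * (2 * N - j) := by
          rw [mul_assoc _ _ ((2 : ℚ) * N - j), choose_two_mul_sub_succ_mul hjN]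
          ring

theorem stmt1_general (N k : ℕ) (hk : 0 < k) (h : 2 * k ^ 2 ≤ N) :
    (2 : ℚ) ^ (-(k : ℤ) - 1) ≤
      ((2 * N - k).choose (N - k) : ℚ) / ((2 * N).choose N : ℚ) := by
  have hNk : k * (k + 1) ≤ 2 * N := by nlinarith
  have key := centralBinom_mul_le_two_pow_mul_choose hNk le_rfl
  have hkQ : (0 : ℚ) < k := by exact_mod_cast hk
  have hcentral : ((2 * N).choose N : ℚ) ≤ 2 ^ k * 2 * (2 * N - k).choose (N - k) := by
    nlinarith
  have hpow : (2 : ℚ) ^ (-(k : ℤ) - 1) = 1 / (2 ^ k * 2) := by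
    rw [zpow_sub₀ two_ne_zero, zpow_neg, zpow_natCast, zpow_one, div_eq_mul_inv, one_div,
      mul_inv]
  have hC : (0 : ℚ) < (2 * N).choose N := by
    exact_mod_cast Nat.choose_pos (by omega : N ≤ 2 * N)
  rw [hpow, div_le_div_iff₀ (by positivity) hC]
  linarith

/-- For all positive integers `N` and `k` with `N ≥ 2k²`,
`C(2N−k, N−k) / C(2N, N) ≥ 2^{−k−1}`. -/
theorem stmt1 (N k : ℕ) (hN : 0 < N) (hk : 0 < k) (h : 2 * k ^ 2 ≤ N) :
    (2 : ℚ) ^ (-(k : ℤ) - 1) ≤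
      ((2 * N - k).choose (N - k) : ℚ) / ((2 * N).choose N : ℚ) :=
  stmt1_general N k hk h
end

section
/- Let 0 < ξ < 1 and 0 < δ < 1 be real, let b ≥ 1 be real, and let M_1, …, M_q > 0 be real. For each i ∈ [q], let D_i be a probability distribution on the interval [0, M_i] with mean μ_i, and let μ̂_i be a real number satisfying 0 < μ̂_i ≤ μ_i·b. For each i ∈ [q], set t_i = ⌈4·b·M_i·log₂(2/δ) / (ξ²·Σ_{j=1}^q μ̂_j)⌉. Let {X_{i,j} : i ∈ [q], j ∈ [t_i]} be mutually independent random variables with X_{i,j} distributed according to D_i for every j ∈ [t_i]. Then with probability at least 1−δ, the estimator Σ_{i=1}^q Σ_{j=1}^{t_i} X_{i,j}/t_i lies in the interval [(1−ξ)·Σ_{i=1}^q μ_i, (1+ξ)·Σ_{i=1}^q μ_i]. -/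
/-!
With `a = ξ² Σ m̂ / (4 b log₂(2/δ))` the choice of `t_i` makes every summand `X_{i,j}/t_i` of the
estimator `S` lie in `[0, a]`, and the summands have total mean `m = Σ m_i`. For independent
variables in `[0, a]`, convexity of `exp` on `[0, a]` bounds the moment generating function of
their sum by `exp (m/a · (e^{sa} - 1))`. Taking `s = ±ξ/(2a)` and `e^x ≤ 1 + x + x²` for `|x| ≤ 1`
gives the multiplicative Chernoff bounds `P(S ≥ (1+ξ)m), P(S ≤ (1-ξ)m) ≤ exp(-m ξ²/(4a))`, and
`m ξ²/(4a) = m b log₂(2/δ) / Σ m̂ ≥ log(2/δ)` because `Σ m̂ ≤ b m` and `ln 2 < 1`.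
-/

open MeasureTheory ProbabilityTheory Real Finset

lemma Real.exp_mul_le_one_add_div_mul {y c : ℝ} (s : ℝ) (hy : 0 ≤ y) (hyc : y ≤ c) (hc : 0 < c) :
    exp (s * y) ≤ 1 + y / c * (exp (s * c) - 1) := by
  have h := convexOn_exp.2 (Set.mem_univ (s * c)) (Set.mem_univ 0) (div_nonneg hy hc.le)
    (sub_nonneg.2 ((div_le_one hc).2 hyc)) (add_sub_cancel _ _)
  have hsy : y / c * (s * c) = s * y := by field_simp
  simp only [smul_eq_mul, mul_zero, add_zero, exp_zero, mul_one, hsy] at h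
  linarith

lemma Real.log_le_logb_two {x : ℝ} (hx : 1 ≤ x) : log x ≤ logb 2 x :=
  le_div_self (log_nonneg hx) (log_pos one_lt_two) (log_two_lt_d9.le.trans (by norm_num))

namespace ProbabilityTheory

variable {Ω : Type*} [MeasurableSpace Ω] {μ : Measure Ω} [IsProbabilityMeasure μ] {a : ℝ}

lemma mgf_le_exp_of_mem_Icc {Y : Ω → ℝ} (hY : Measurable Y) (ha : 0 < a)
    (hbound : ∀ᵐ ω ∂μ, Y ω ∈ Set.Icc 0 a) (s : ℝ) :
    mgf Y μ s ≤ exp (μ[Y] / a * (exp (s * a) - 1)) := by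
  have hYint : Integrable Y μ := .of_mem_Icc 0 a hY.aemeasurable hbound
  have hlin : Integrable (fun ω ↦ Y ω / a * (exp (s * a) - 1)) μ :=
    (hYint.div_const a).mul_const _
  calc mgf Y μ s ≤ ∫ ω, (1 + Y ω / a * (exp (s * a) - 1)) ∂μ := by
        refine integral_mono_ae (integrable_exp_mul_of_mem_Icc hY.aemeasurable hbound)
          ((integrable_const 1).add hlin) ?_
        filter_upwards [hbound] with ω h
        exact exp_mul_le_one_add_div_mul s h.1 h.2 ha
    _ = 1 + μ[Y] / a * (exp (s * a) - 1) := by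
        rw [integral_add (integrable_const 1) hlin, integral_const, integral_mul_const,
          integral_div]
        simp
    _ ≤ exp (μ[Y] / a * (exp (s * a) - 1)) := by
        linarith [add_one_le_exp (μ[Y] / a * (exp (s * a) - 1))]

variable {ι : Type*} [Fintype ι] {Y : ι → Ω → ℝ}

lemma mgf_sum_le_exp_of_mem_Icc (hY : ∀ i, Measurable (Y i)) (hindep : iIndepFun Y μ)
    (ha : 0 < a) (hbound : ∀ i, ∀ᵐ ω ∂μ, Y i ω ∈ Set.Icc 0 a) (s : ℝ) :
    mgf (∑ i, Y i) μ s ≤ exp ((∑ i, μ[Y i]) / a * (exp (s * a) - 1)) := by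
  rw [hindep.mgf_sum hY, sum_div, sum_mul, exp_sum]
  exact prod_le_prod (fun i _ ↦ mgf_nonneg) fun i _ ↦ mgf_le_exp_of_mem_Icc (hY i) ha (hbound i) s

lemma mgf_sum_div_le_exp_of_abs_le (hY : ∀ i, Measurable (Y i)) (hindep : iIndepFun Y μ)
    (ha : 0 < a) (hbound : ∀ i, ∀ᵐ ω ∂μ, Y i ω ∈ Set.Icc 0 a) {x : ℝ} (hx : |x| ≤ 1) :
    mgf (∑ i, Y i) μ (x / a) ≤ exp ((∑ i, μ[Y i]) / a * (x + x ^ 2)) := by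
  refine (mgf_sum_le_exp_of_mem_Icc hY hindep ha hbound _).trans (exp_le_exp.2 ?_)
  have hmean : 0 ≤ ∑ i, μ[Y i] :=
    sum_nonneg fun i _ ↦ integral_nonneg_of_ae ((hbound i).mono fun _ h ↦ h.1)
  rw [div_mul_cancel₀ x ha.ne']
  gcongr
  linarith [(abs_le.1 (abs_exp_sub_one_sub_id_le hx)).2]

lemma integrable_exp_mul_sum_of_mem_Icc (hY : ∀ i, Measurable (Y i)) (hindep : iIndepFun Y μ)
    (hbound : ∀ i, ∀ᵐ ω ∂μ, Y i ω ∈ Set.Icc 0 a) (s : ℝ) :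
    Integrable (fun ω ↦ exp (s * (∑ i, Y i) ω)) μ :=
  hindep.integrable_exp_mul_sum hY fun i _ ↦
    integrable_exp_mul_of_mem_Icc (hY i).aemeasurable (hbound i)

lemma measureReal_sum_ge_le_exp (hY : ∀ i, Measurable (Y i)) (hindep : iIndepFun Y μ)
    (ha : 0 < a) (hbound : ∀ i, ∀ᵐ ω ∂μ, Y i ω ∈ Set.Icc 0 a) {ξ : ℝ} (hξ0 : 0 ≤ ξ) (hξ2 : ξ ≤ 2) :
    μ.real {ω | (1 + ξ) * ∑ i, μ[Y i] ≤ (∑ i, Y i) ω} ≤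
      exp (-((∑ i, μ[Y i]) * ξ ^ 2 / (4 * a))) := by
  have hx : |ξ / 2| ≤ 1 := by rw [abs_of_nonneg (by positivity)]; linarith
  calc _ ≤ exp (-(ξ / 2 / a) * ((1 + ξ) * ∑ i, μ[Y i])) * mgf (∑ i, Y i) μ (ξ / 2 / a) :=
        measure_ge_le_exp_mul_mgf _ (by positivity)
          (integrable_exp_mul_sum_of_mem_Icc hY hindep hbound _)
    _ ≤ exp (-(ξ / 2 / a) * ((1 + ξ) * ∑ i, μ[Y i])) *
          exp ((∑ i, μ[Y i]) / a * (ξ / 2 + (ξ / 2) ^ 2)) := by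
        gcongr; exact mgf_sum_div_le_exp_of_abs_le hY hindep ha hbound hx
    _ = exp (-((∑ i, μ[Y i]) * ξ ^ 2 / (4 * a))) := by
        rw [← exp_add]; congr 1; field_simp; ring

lemma measureReal_sum_le_le_exp (hY : ∀ i, Measurable (Y i)) (hindep : iIndepFun Y μ)
    (ha : 0 < a) (hbound : ∀ i, ∀ᵐ ω ∂μ, Y i ω ∈ Set.Icc 0 a) {ξ : ℝ} (hξ0 : 0 ≤ ξ) (hξ2 : ξ ≤ 2) :
    μ.real {ω | (∑ i, Y i) ω ≤ (1 - ξ) * ∑ i, μ[Y i]} ≤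
      exp (-((∑ i, μ[Y i]) * ξ ^ 2 / (4 * a))) := by
  have hx : |-(ξ / 2)| ≤ 1 := by rw [abs_neg, abs_of_nonneg (by positivity)]; linarith
  calc _ ≤ exp (-(-(ξ / 2) / a) * ((1 - ξ) * ∑ i, μ[Y i])) * mgf (∑ i, Y i) μ (-(ξ / 2) / a) :=
        measure_le_le_exp_mul_mgf _ (div_nonpos_of_nonpos_of_nonneg (by linarith) ha.le)
          (integrable_exp_mul_sum_of_mem_Icc hY hindep hbound _)
    _ ≤ exp (-(-(ξ / 2) / a) * ((1 - ξ) * ∑ i, μ[Y i])) *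
          exp ((∑ i, μ[Y i]) / a * (-(ξ / 2) + (-(ξ / 2)) ^ 2)) := by
        gcongr; exact mgf_sum_div_le_exp_of_abs_le hY hindep ha hbound hx
    _ = exp (-((∑ i, μ[Y i]) * ξ ^ 2 / (4 * a))) := by
        rw [← exp_add]; congr 1; field_simp; ring

theorem one_sub_two_mul_exp_le_measureReal_sum_mem_Icc (hY : ∀ i, Measurable (Y i))
    (hindep : iIndepFun Y μ) (ha : 0 < a) (hbound : ∀ i, ∀ᵐ ω ∂μ, Y i ω ∈ Set.Icc 0 a) {ξ : ℝ}
    (hξ0 : 0 ≤ ξ) (hξ2 : ξ ≤ 2) :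
    1 - 2 * exp (-((∑ i, μ[Y i]) * ξ ^ 2 / (4 * a))) ≤
      μ.real {ω | ∑ i, Y i ω ∈ Set.Icc ((1 - ξ) * ∑ i, μ[Y i]) ((1 + ξ) * ∑ i, μ[Y i])} := by
  set m := ∑ i, μ[Y i]
  set E := {ω | ∑ i, Y i ω ∈ Set.Icc ((1 - ξ) * m) ((1 + ξ) * m)}
  set Lo := {ω | (∑ i, Y i) ω ≤ (1 - ξ) * m}
  set Up := {ω | (1 + ξ) * m ≤ (∑ i, Y i) ω}
  have hcover : Set.univ ⊆ E ∪ (Lo ∪ Up) := by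
    intro ω _
    simp only [E, Lo, Up, Set.mem_union, Set.mem_ofPred_eq, Set.mem_Icc, Finset.sum_apply]
    by_cases hlow : ∑ i, Y i ω ≤ (1 - ξ) * m
    · exact .inr (.inl hlow)
    · by_cases hup : (1 + ξ) * m ≤ ∑ i, Y i ω
      · exact .inr (.inr hup)
      · exact .inl ⟨by linarith, by linarith⟩
  have hunion : 1 ≤ μ.real E + (μ.real Lo + μ.real Up) :=
    calc 1 = μ.real Set.univ := probReal_univ.symm
      _ ≤ μ.real (E ∪ (Lo ∪ Up)) := measureReal_mono hcover
      _ ≤ μ.real E + (μ.real Lo + μ.real Up) :=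
        (measureReal_union_le _ _).trans (add_le_add le_rfl (measureReal_union_le _ _))
  linarith [measureReal_sum_le_le_exp hY hindep ha hbound hξ0 hξ2,
    measureReal_sum_ge_le_exp hY hindep ha hbound hξ0 hξ2]

theorem one_sub_two_mul_exp_le_measureReal_stratified_mean_mem_Icc {t : ι → ℕ}
    {X : (Σ i, Fin (t i)) → Ω → ℝ} {D : ι → Measure ℝ} {M m : ι → ℝ}
    (hX : ∀ p, Measurable (X p)) (hindep : iIndepFun X μ) (hdist : ∀ p, μ.map (X p) = D p.1)
    (hsupp : ∀ i, ∀ᵐ x ∂(D i), x ∈ Set.Icc 0 (M i)) (hmean : ∀ i, ∫ x, x ∂(D i) = m i)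
    (ht : ∀ i, 0 < t i) (ha : 0 < a) (hMt : ∀ i, M i ≤ a * t i) {ξ : ℝ} (hξ0 : 0 ≤ ξ)
    (hξ2 : ξ ≤ 2) :
    1 - 2 * exp (-((∑ i, m i) * ξ ^ 2 / (4 * a))) ≤
      μ.real {ω | ∑ i, ∑ j : Fin (t i), X ⟨i, j⟩ ω / t i
        ∈ Set.Icc ((1 - ξ) * ∑ i, m i) ((1 + ξ) * ∑ i, m i)} := by
  set Y : (Σ i, Fin (t i)) → Ω → ℝ := fun p ω ↦ X p ω / t p.1
  have htR : ∀ i, (0 : ℝ) < t i := fun i ↦ Nat.cast_pos.2 (ht i)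
  have hbound : ∀ p, ∀ᵐ ω ∂μ, Y p ω ∈ Set.Icc 0 a := fun p ↦ by
    filter_upwards [ae_of_ae_map (hX p).aemeasurable ((hdist p).symm ▸ hsupp p.1)] with ω h
    exact ⟨div_nonneg h.1 (htR _).le, (div_le_iff₀ (htR _)).2 (h.2.trans (hMt _))⟩
  have hmeanY : ∑ p, μ[Y p] = ∑ i, m i := by
    have hY : ∀ p, μ[Y p] = m p.1 / t p.1 := fun p ↦ by
      rw [integral_div, ← hmean, ← hdist,
        integral_map (f := fun x ↦ x) (hX p).aemeasurable aestronglyMeasurable_id]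
    simp only [hY, Fintype.sum_sigma, sum_const, card_univ, Fintype.card_fin, nsmul_eq_mul]
    exact sum_congr rfl fun i _ ↦ mul_div_cancel₀ _ (htR i).ne'
  have h := one_sub_two_mul_exp_le_measureReal_sum_mem_Icc (fun p ↦ (hX p).div_const _)
    (hindep.comp (fun p x ↦ x / t p.1) fun p ↦ measurable_id.div_const _) ha hbound hξ0 hξ2
  rw [hmeanY] at h
  simpa only [Fintype.sum_sigma] using h

end ProbabilityTheory

theorem stmt2_general {Ω : Type*} [MeasurableSpace Ω] (μ : Measure Ω) [IsProbabilityMeasure μ]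
    (q : ℕ) (hq : 0 < q) (ξ δ b : ℝ) (hξ0 : 0 < ξ) (hξ1 : ξ < 1)
    (hδ0 : 0 < δ) (hδ1 : δ < 1) (hb : 1 ≤ b)
    (M m mhat : Fin q → ℝ)
    (hM : ∀ i, 0 < M i)
    (D : Fin q → Measure ℝ)
    (hsupp : ∀ i, ∀ᵐ x ∂(D i), x ∈ Set.Icc 0 (M i))
    (hmean : ∀ i, ∫ x, x ∂(D i) = m i)
    (hmhat0 : ∀ i, 0 < mhat i) (hmhatb : ∀ i, mhat i ≤ m i * b)
    (t : Fin q → ℕ)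
    (ht : ∀ i, t i =
      ⌈4 * b * M i * Real.logb 2 (2 / δ) / (ξ ^ 2 * ∑ j : Fin q, mhat j)⌉₊)
    (X : (Σ i : Fin q, Fin (t i)) → Ω → ℝ)
    (hXmeas : ∀ p, Measurable (X p))
    (hXindep : iIndepFun X μ)
    (hXdist : ∀ p : Σ i : Fin q, Fin (t i), Measure.map (X p) μ = D p.1) :
    ENNReal.ofReal (1 - δ) ≤
      μ {ω | ∑ i : Fin q, ∑ j : Fin (t i), X ⟨i, j⟩ ω / (t i : ℝ)
        ∈ Set.Icc ((1 - ξ) * ∑ i : Fin q, m i) ((1 + ξ) * ∑ i : Fin q, m i)} := by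
  have hb0 : 0 < b := by linarith
  have hmhat : 0 < ∑ j, mhat j := sum_pos (fun i _ ↦ hmhat0 i) ⟨⟨0, hq⟩, mem_univ _⟩
  have hmhat_le : ∑ j, mhat j ≤ b * ∑ i, m i := by
    rw [mul_comm, sum_mul]; exact sum_le_sum fun i _ ↦ hmhatb i
  have hlog : log (2 / δ) ≤ logb 2 (2 / δ) := log_le_logb_two (by rw [le_div_iff₀ hδ0]; linarith)
  have hL : 0 < logb 2 (2 / δ) := (log_pos (by rw [lt_div_iff₀ hδ0]; linarith)).trans_le hlog
  set a := ξ ^ 2 * (∑ j, mhat j) / (4 * b * logb 2 (2 / δ))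
  have ha : 0 < a := by positivity
  have hta : ∀ i, t i = ⌈M i / a⌉₊ := fun i ↦ by rw [ht i]; congr 1; simp only [a]; field_simp
  have hMt : ∀ i, M i ≤ a * t i := fun i ↦ by rw [hta i, ← div_le_iff₀' ha]; exact Nat.le_ceil _
  have ht0 : ∀ i, 0 < t i := fun i ↦ by rw [hta i]; exact Nat.ceil_pos.2 (div_pos (hM i) ha)
  have hexponent : log (2 / δ) ≤ (∑ i, m i) * ξ ^ 2 / (4 * a) :=
    calc log (2 / δ) ≤ logb 2 (2 / δ) := hlog
      _ ≤ logb 2 (2 / δ) * (b * ∑ i, m i) / ∑ j, mhat j := by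
          rw [le_div_iff₀ hmhat]; exact mul_le_mul_of_nonneg_left hmhat_le hL.le
      _ = (∑ i, m i) * ξ ^ 2 / (4 * a) := by simp only [a]; field_simp
  have hδ : 2 * exp (-((∑ i, m i) * ξ ^ 2 / (4 * a))) ≤ δ :=
    calc _ ≤ 2 * exp (-log (2 / δ)) := by gcongr
      _ = δ := by rw [exp_neg, exp_log (by positivity)]; field_simp
  have h := one_sub_two_mul_exp_le_measureReal_stratified_mean_mem_Icc hXmeas hXindep hXdist
    hsupp hmean ht0 ha hMt hξ0.le (by linarith)
  exact ENNReal.ofReal_le_of_le_toReal (by rw [← measureReal_def]; linarith)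

/-- Importance-sampling concentration lemma (Lemma 3.1): given distributions `D_i` on
`[0, M_i]` with means `m_i`, crude estimates `0 < m̂_i ≤ m_i·b`, and
`t_i = ⌈4·b·M_i·log₂(2/δ) / (ξ²·Σ_j m̂_j)⌉` independent samples `X_{i,j} ~ D_i`,
with probability at least `1−δ` the estimator `Σ_i Σ_j X_{i,j}/t_i` is within a factor
`1 ± ξ` of `Σ_i m_i`. -/
theorem stmt2 {Ω : Type*} [MeasurableSpace Ω] (μ : Measure Ω) [IsProbabilityMeasure μ]
    (q : ℕ) (hq : 0 < q) (ξ δ b : ℝ) (hξ0 : 0 < ξ) (hξ1 : ξ < 1)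
    (hδ0 : 0 < δ) (hδ1 : δ < 1) (hb : 1 ≤ b)
    (M m mhat : Fin q → ℝ)
    (hM : ∀ i, 0 < M i)
    (D : Fin q → Measure ℝ) (hD : ∀ i, IsProbabilityMeasure (D i))
    (hsupp : ∀ i, ∀ᵐ x ∂(D i), x ∈ Set.Icc 0 (M i))
    (hmean : ∀ i, ∫ x, x ∂(D i) = m i)
    (hmhat0 : ∀ i, 0 < mhat i) (hmhatb : ∀ i, mhat i ≤ m i * b)
    (t : Fin q → ℕ)
    (ht : ∀ i, t i =
      ⌈4 * b * M i * Real.logb 2 (2 / δ) / (ξ ^ 2 * ∑ j : Fin q, mhat j)⌉₊)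
    (X : (Σ i : Fin q, Fin (t i)) → Ω → ℝ)
    (hXmeas : ∀ p, Measurable (X p))
    (hXindep : iIndepFun X μ)
    (hXdist : ∀ p : Σ i : Fin q, Fin (t i), Measure.map (X p) μ = D p.1) :
    ENNReal.ofReal (1 - δ) ≤
      μ {ω | ∑ i : Fin q, ∑ j : Fin (t i), X ⟨i, j⟩ ω / (t i : ℝ)
        ∈ Set.Icc ((1 - ξ) * ∑ i : Fin q, m i) ((1 + ξ) * ∑ i : Fin q, m i)} :=
  stmt2_general μ q hq ξ δ b hξ0 hξ1 hδ0 hδ1 hb M m mhat hM D hsupp hmean hmhat0 hmhatb t ht X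
    hXmeas hXindep hXdist
end

section
/- Let k ≥ 2 and let G be a k-hypergraph on n vertices, where n ≥ 2 is a power of two, let M be a positive power of two, and let X_1, …, X_k be disjoint subsets of V(G). Write H = G[X_1, …, X_k] and p_out = (8k·log₂ n)^{−k}. For each i ∈ [k] and each integer 0 ≤ j ≤ k·log₂ n, let Y_{i,j} ⊆ X_i be a random subset obtained by including each vertex of X_i independently with probability 2^{−j}, with all inclusion events (over all i, j and all vertices) mutually independent. Let A be the set of tuples (a_1, …, a_k) of integers with 0 ≤ a_i ≤ k·log₂ n for all i and a_1 + ⋯ + a_k ≥ log₂ M. If e(H) < M·p_out/(2(k·log₂ n)^k), then the probability that there exists (a_1, …, a_k) ∈ A such that G[Y_{1,a_1}, …, Y_{k,a_k}] contains at least one edge is at most p_out/2. -/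
/-!
Let `H` be the set of edges of `G[X_1, …, X_k]` and `L = k·log₂ n`. Since an edge has exactly
`k` vertices and the `X_i` are disjoint, an edge meeting every `Y_{i,a_i} ⊆ X_i` lies in `H`, and
for a fixed tuple `a` and edge of `H` this happens with probability `2^{-Σ aᵢ}`. The union bound
gives `|H| · Σ_{a ∈ A} 2^{-Σ aᵢ}`; as `a ↦ (a_2, …, a_k, Σ aᵢ)` is injective, the sum is at most
`(L + 1)^{k-1}` times a geometric tail `2 · 2^{-log₂ M}`. If `H` and `A` are nonempty, the
hypothesis on `e(H)` forces `2 (8L)^k L^k < M ≤ 2^{kL}`, hence `L ≥ 6`, and then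
`2 (L + 1)^{k-1} ≤ L^k` (as `(1 + 1/L)^L ≤ e`) closes the estimate.
-/

open MeasureTheory ProbabilityTheory Finset Function Classical

lemma inter_eq_of_card_inter_eq_one {V : Type*} [DecidableEq V] {k : ℕ} {e : Finset V}
    (he : e.card = k) {X Y : Fin k → Finset V} (hX : Pairwise (Disjoint on X))
    (hYX : ∀ i, Y i ⊆ X i) (hY : ∀ i, (e ∩ Y i).card = 1) (i : Fin k) :
    e ∩ Y i = e ∩ X i := by
  have hle : ∀ j ∈ univ, (e ∩ Y j).card ≤ (e ∩ X j).card := fun j _ =>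
    card_le_card (inter_subset_inter_left (hYX j))
  have hsum : ∑ j, (e ∩ X j).card ≤ ∑ j, (e ∩ Y j).card := calc
    ∑ j, (e ∩ X j).card = (univ.biUnion fun j => e ∩ X j).card :=
      (card_biUnion fun j _ j' _ hjj' =>
        (hX hjj').mono inter_subset_right inter_subset_right).symm
    _ ≤ e.card := card_le_card (biUnion_subset.2 fun j _ => inter_subset_left)
    _ = ∑ j, (e ∩ Y j).card := by simp [hY, he]
  have hcard := (sum_eq_sum_iff_of_le hle).1 ((sum_le_sum hle).antisymm hsum) i (mem_univ i)
  exact eq_of_subset_of_card_le (inter_subset_inter_left (hYX i)) hcard.ge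

lemma measure_iInter_eq_half_pow {Ω V : Type*} [MeasurableSpace Ω] {μ : Measure Ω} {k N : ℕ}
    {B : Fin k → Fin N → V → Set Ω}
    (hB : iIndepSet (fun p : Fin k × Fin N × V => B p.1 p.2.1 p.2.2) μ)
    (hBprob : ∀ i j v, μ (B i j v) = 1 / 2 ^ (j : ℕ)) (a : Fin k → Fin N) (v : Fin k → V) :
    μ (⋂ i, B i (a i) (v i)) = ENNReal.ofReal ((1 / 2) ^ ∑ i, (a i : ℕ)) := by
  have hinj : Injective fun i => (i, a i, v i) := fun i j h => congrArg Prod.fst h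
  have := (hB.precomp hinj).meas_biInter univ
  simp only [Function.comp_apply, mem_univ, Set.iInter_true] at this
  rw [this, ENNReal.ofReal_pow (by norm_num), ← prod_pow_eq_pow_sum]
  refine prod_congr rfl fun i _ => ?_
  rw [hBprob, one_div, one_div, ENNReal.ofReal_inv_of_pos two_pos, ENNReal.inv_pow]
  norm_num

theorem measure_exists_crossing_edge_le {Ω V : Type*} [DecidableEq V] [MeasurableSpace Ω]
    {μ : Measure Ω} {k N : ℕ} {E : Finset (Finset V)} (hE : ∀ e ∈ E, e.card = k)
    {X : Fin k → Finset V} (hX : Pairwise (Disjoint on X)) {B : Fin k → Fin N → V → Set Ω}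
    (hB : iIndepSet (fun p : Fin k × Fin N × V => B p.1 p.2.1 p.2.2) μ)
    (hBprob : ∀ i j v, μ (B i j v) = 1 / 2 ^ (j : ℕ)) (A : Finset (Fin k → Fin N)) :
    μ {ω | ∃ a ∈ A, ∃ e ∈ E, ∀ i, (e ∩ (X i).filter (fun v => ω ∈ B i (a i) v)).card = 1}
      ≤ ENNReal.ofReal ((E.filter fun e => ∀ i, (e ∩ X i).card = 1).card *
          ∑ a ∈ A, (1 / 2 : ℝ) ^ ∑ i, (a i : ℕ)) := by
  set H := E.filter fun e => ∀ i, (e ∩ X i).card = 1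
  have hcover : {ω | ∃ a ∈ A, ∃ e ∈ E, ∀ i,
      (e ∩ (X i).filter (fun v => ω ∈ B i (a i) v)).card = 1} ⊆
      ⋃ a ∈ A, ⋃ e ∈ H, ⋂ i, ⋂ v ∈ e ∩ X i, B i (a i) v := by
    rintro ω ⟨a, ha, e, he, hcard⟩
    have hinter := inter_eq_of_card_inter_eq_one (hE e he) hX (fun i => filter_subset _ _) hcard
    simp only [Set.mem_iUnion, Set.mem_iInter]
    refine ⟨a, ha, e, mem_filter.2 ⟨he, fun i => hinter i ▸ hcard i⟩, fun i v hv => ?_⟩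
    rw [← hinter i] at hv
    exact (mem_filter.1 (mem_inter.1 hv).2).2
  have hprob : ∀ a : Fin k → Fin N, ∀ e ∈ H,
      μ (⋂ i, ⋂ v ∈ e ∩ X i, B i (a i) v) = ENNReal.ofReal ((1 / 2) ^ ∑ i, (a i : ℕ)) := by
    intro a e he
    choose v hv using fun i => card_eq_one.1 ((mem_filter.1 he).2 i)
    simp only [hv, mem_singleton, Set.iInter_iInter_eq_left]
    exact measure_iInter_eq_half_pow hB hBprob a v
  calc μ _ ≤ μ (⋃ a ∈ A, ⋃ e ∈ H, ⋂ i, ⋂ v ∈ e ∩ X i, B i (a i) v) := measure_mono hcover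
    _ ≤ ∑ a ∈ A, ∑ e ∈ H, μ (⋂ i, ⋂ v ∈ e ∩ X i, B i (a i) v) :=
      (measure_biUnion_finset_le _ _).trans (sum_le_sum fun a _ => measure_biUnion_finset_le _ _)
    _ = ∑ a ∈ A, ∑ e ∈ H, ENNReal.ofReal ((1 / 2) ^ ∑ i, (a i : ℕ)) :=
      sum_congr rfl fun a _ => sum_congr rfl (hprob a)
    _ = ENNReal.ofReal (H.card * ∑ a ∈ A, (1 / 2 : ℝ) ^ ∑ i, (a i : ℕ)) := by
      rw [ENNReal.ofReal_mul (by positivity), ENNReal.ofReal_natCast,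
        ENNReal.ofReal_sum_of_nonneg fun _ _ => by positivity, mul_sum]
      simp

lemma six_le_of_eight_mul_sq_lt_two_pow {L : ℕ} (hL : 0 < L) (h : 8 * L ^ 2 < 2 ^ L) :
    6 ≤ L := by
  by_contra! hL6
  interval_cases L <;> norm_num at h

lemma two_mul_add_one_pow_le_pow {L m : ℕ} (hL : 6 ≤ L) (hm : m ≤ L) :
    2 * ((L : ℝ) + 1) ^ m ≤ (L : ℝ) ^ (m + 1) := by
  have hL' : (6 : ℝ) ≤ L := by exact_mod_cast hL
  have hexp : (1 + (L : ℝ)⁻¹) ^ m ≤ 3 := calc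
    (1 + (L : ℝ)⁻¹) ^ m ≤ (1 + (L : ℝ)⁻¹) ^ L := pow_le_pow_right₀ (by simp) hm
    _ ≤ Real.exp 1 := Real.one_add_inv_pow_le_exp
    _ ≤ 3 := (Real.exp_one_lt_d9.trans (by norm_num)).le
  have hfactor : ((L : ℝ) + 1) ^ m = (L : ℝ) ^ m * (1 + (L : ℝ)⁻¹) ^ m := by
    rw [← mul_pow]
    field_simp
  rw [hfactor, pow_succ]
  nlinarith [pow_pos (show (0 : ℝ) < L by linarith) m]

lemma sum_fin_val_le {k L : ℕ} (a : Fin k → Fin (L + 1)) : ∑ i, (a i : ℕ) ≤ k * L := by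
  simpa using sum_le_sum fun i (_ : i ∈ univ) => Fin.is_le (a i)

lemma sum_half_pow_sum_le (m L t : ℕ) :
    ∑ a ∈ univ.filter (fun a : Fin (m + 1) → Fin (L + 1) => t ≤ ∑ i, (a i : ℕ)),
      (1 / 2 : ℝ) ^ ∑ i, (a i : ℕ) ≤ (L + 1) ^ m * (2 * (1 / 2) ^ t) := by
  set A := univ.filter (fun a : Fin (m + 1) → Fin (L + 1) => t ≤ ∑ i, (a i : ℕ))
  let g (a : Fin (m + 1) → Fin (L + 1)) : (Fin m → Fin (L + 1)) × ℕ :=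
    (Fin.tail a, ∑ i, (a i : ℕ))
  have hg : Injective g := by
    intro a b hab
    obtain ⟨htail, hsum⟩ := Prod.mk.inj hab
    have hhead : a 0 = b 0 := by
      rw [Fin.sum_univ_succ, Fin.sum_univ_succ] at hsum
      have : ∑ i : Fin m, (a i.succ : ℕ) = ∑ i : Fin m, (b i.succ : ℕ) :=
        congrArg (fun f : Fin m → Fin (L + 1) => ∑ i, (f i : ℕ)) htail
      exact Fin.ext (by omega)
    rw [← Fin.cons_self_tail a, ← Fin.cons_self_tail b, hhead, htail]
  have himage : A.image g ⊆ univ ×ˢ Ico t ((m + 1) * L + 1) := by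
    simp only [subset_iff, mem_image, mem_univ, true_and, mem_product, mem_Ico]
    rintro _ ⟨a, ha, rfl⟩
    exact ⟨(mem_filter.1 ha).2, Nat.lt_succ_of_le (sum_fin_val_le a)⟩
  calc ∑ a ∈ A, (1 / 2 : ℝ) ^ ∑ i, (a i : ℕ)
      = ∑ p ∈ A.image g, (1 / 2 : ℝ) ^ p.2 := by
        rw [sum_image fun a _ b _ h => hg h]
    _ ≤ ∑ p ∈ univ ×ˢ Ico t ((m + 1) * L + 1), (1 / 2 : ℝ) ^ p.2 :=
      sum_le_sum_of_subset_of_nonneg himage fun _ _ _ => by positivity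
    _ = (L + 1) ^ m * ∑ s ∈ Ico t ((m + 1) * L + 1), (1 / 2 : ℝ) ^ s := by
      simp [sum_product]
    _ ≤ (L + 1) ^ m * ((1 / 2) ^ t / (1 - 1 / 2)) := by
      gcongr
      exact geom_sum_Ico_le_of_lt_one (by norm_num) (by norm_num)
    _ = (L + 1) ^ m * (2 * (1 / 2) ^ t) := by ring

lemma mul_add_one_pow_mul_half_pow_le {L m t : ℕ} {c : ℝ} (hm : m + 1 ≤ L)
    (ht : t ≤ (m + 1) * L) (hc : 1 ≤ c)
    (hlt : c < 2 ^ t * ((8 * (L : ℝ)) ^ (m + 1))⁻¹ / (2 * (L : ℝ) ^ (m + 1))) :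
    c * ((L + 1) ^ m * (2 * (1 / 2) ^ t)) ≤ ((8 * (L : ℝ)) ^ (m + 1))⁻¹ / 2 := by
  have hL : (0 : ℝ) < L := by exact_mod_cast (show 0 < L by omega)
  have hbig : 2 * (8 * (L : ℝ)) ^ (m + 1) * (L : ℝ) ^ (m + 1) < 2 ^ t := by
    have := hc.trans_lt hlt
    rw [lt_div_iff₀ (by positivity), one_mul, lt_mul_inv_iff₀ (by positivity)] at this
    linarith
  have hsq : 8 * L ^ 2 < 2 ^ L := by
    refine lt_of_pow_lt_pow_left₀ (m + 1) (by positivity) ?_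
    have : ((8 * L ^ 2 : ℕ) : ℝ) ^ (m + 1) < ((2 ^ L : ℕ) : ℝ) ^ (m + 1) := calc
      ((8 * L ^ 2 : ℕ) : ℝ) ^ (m + 1) = (8 * (L : ℝ)) ^ (m + 1) * (L : ℝ) ^ (m + 1) := by
        push_cast; ring
      _ < 2 ^ t := by
        linarith [show (0 : ℝ) < (8 * (L : ℝ)) ^ (m + 1) * (L : ℝ) ^ (m + 1) by positivity]
      _ ≤ 2 ^ ((m + 1) * L) := pow_le_pow_right₀ (by norm_num) ht
      _ = ((2 ^ L : ℕ) : ℝ) ^ (m + 1) := by push_cast; ring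
    exact_mod_cast this
  have hkey := two_mul_add_one_pow_le_pow (six_le_of_eight_mul_sq_lt_two_pow (by omega) hsq)
    (by omega : m ≤ L)
  have hratio : 2 * ((L : ℝ) + 1) ^ m / (L : ℝ) ^ (m + 1) ≤ 1 :=
    (div_le_one (by positivity)).2 hkey
  set q := ((8 * (L : ℝ)) ^ (m + 1))⁻¹
  calc c * ((L + 1) ^ m * (2 * (1 / 2) ^ t))
      ≤ 2 ^ t * q / (2 * (L : ℝ) ^ (m + 1)) * ((L + 1) ^ m * (2 * (1 / 2) ^ t)) := by
        gcongr
    _ = q / 2 * (2 * ((L : ℝ) + 1) ^ m / (L : ℝ) ^ (m + 1)) := by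
        rw [one_div_pow]
        field_simp
    _ ≤ q / 2 := mul_le_of_le_one_right (by positivity) hratio

theorem stmt3_general {V : Type*} [DecidableEq V]
    (n k M : ℕ) (hk : 2 ≤ k) (hn2 : 2 ≤ n)
    (hMpow : ∃ m : ℕ, M = 2 ^ m)
    (E : Finset (Finset V)) (hE : ∀ e ∈ E, e.card = k)
    (X : Fin k → Finset V) (hX : ∀ i j : Fin k, i ≠ j → Disjoint (X i) (X j))
    {Ω : Type*} [MeasurableSpace Ω] (μ : Measure Ω)
    (B : Fin k → Fin (k * Nat.log 2 n + 1) → V → Set Ω)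
    (hBindep : iIndepSet
      (fun p : Fin k × Fin (k * Nat.log 2 n + 1) × V => B p.1 p.2.1 p.2.2) μ)
    (hBprob : ∀ i j v, μ (B i j v) = 1 / 2 ^ (j : ℕ))
    (hsmall : ((E.filter (fun e => ∀ i : Fin k, (e ∩ X i).card = 1)).card : ℝ) <
      (M : ℝ) * ((8 * (k : ℝ) * (Nat.log 2 n : ℝ)) ^ k)⁻¹
        / (2 * ((k : ℝ) * (Nat.log 2 n : ℝ)) ^ k)) :
    μ {ω | ∃ a : Fin k → Fin (k * Nat.log 2 n + 1),
        Nat.log 2 M ≤ ∑ i : Fin k, (a i : ℕ) ∧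
        ∃ e ∈ E, ∀ i : Fin k,
          (e ∩ (X i).filter (fun v => ω ∈ B i (a i) v)).card = 1}
      ≤ ENNReal.ofReal (((8 * (k : ℝ) * (Nat.log 2 n : ℝ)) ^ k)⁻¹ / 2) := by
  obtain ⟨t, rfl⟩ := hMpow
  obtain ⟨m, rfl⟩ : ∃ m, k = m + 1 := ⟨k - 1, by omega⟩
  set L := (m + 1) * Nat.log 2 n
  set H := E.filter fun e => ∀ i : Fin (m + 1), (e ∩ X i).card = 1
  set A := univ.filter fun a : Fin (m + 1) → Fin (L + 1) => t ≤ ∑ i, (a i : ℕ)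
  have hunion := measure_exists_crossing_edge_le hE (fun i j => hX i j) hBindep hBprob A
  refine (measure_mono ?_).trans (hunion.trans (ENNReal.ofReal_le_ofReal ?_))
  · rintro ω ⟨a, ha, hedge⟩
    exact ⟨a, by simpa [A, Nat.log_pow] using ha, hedge⟩
  rcases Nat.eq_zero_or_pos H.card with hH | hH
  · rw [hH, Nat.cast_zero, zero_mul]
    positivity
  by_cases ht : t ≤ (m + 1) * L
  · have hsmall' : (H.card : ℝ) <
        2 ^ t * ((8 * (L : ℝ)) ^ (m + 1))⁻¹ / (2 * (L : ℝ) ^ (m + 1)) := by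
      convert hsmall using 2 <;> push_cast [L, Nat.log_pow] <;> ring
    have hkL : m + 1 ≤ L := Nat.le_mul_of_pos_right _ (Nat.log_pos one_lt_two hn2)
    calc (H.card : ℝ) * ∑ a ∈ A, (1 / 2 : ℝ) ^ ∑ i, (a i : ℕ)
        ≤ H.card * ((L + 1) ^ m * (2 * (1 / 2) ^ t)) := by
          gcongr
          exact sum_half_pow_sum_le m L t
      _ ≤ ((8 * (L : ℝ)) ^ (m + 1))⁻¹ / 2 :=
          mul_add_one_pow_mul_half_pow_le hkL ht (by exact_mod_cast hH) hsmall'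
      _ = _ := by push_cast [L]; ring
  · have hA : A = ∅ := filter_eq_empty_iff.2 fun a _ h => ht (h.trans (sum_fin_val_le a))
    rw [hA, sum_empty, mul_zero]
    positivity

/-- Soundness of `VerifyGuess` (Lemma 4.1): `G` is a `k`-hypergraph on `n` vertices
(`n ≥ 2` a power of two), `M` a positive power of two, `X_1,…,X_k` disjoint vertex subsets,
`H = G[X_1,…,X_k]`, and `Y_{i,j} ⊆ X_i` random subsets keeping each vertex independently
with probability `2^{-j}` (for `0 ≤ j ≤ k·log₂ n`, all inclusion events independent).
If `e(H) < M·p_out/(2(k·log₂ n)^k)` with `p_out = (8k·log₂ n)^{-k}`, then the probability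
that some admissible tuple `(a_1,…,a_k)` (entries in `[0, k·log₂ n]`, sum at least `log₂ M`)
yields an edge in `G[Y_{1,a_1},…,Y_{k,a_k}]` is at most `p_out/2`. -/
theorem stmt3 {V : Type*} [Fintype V] [DecidableEq V]
    (n k M : ℕ) (hk : 2 ≤ k) (hn : Fintype.card V = n) (hn2 : 2 ≤ n)
    (hnpow : ∃ m : ℕ, n = 2 ^ m) (hMpow : ∃ m : ℕ, M = 2 ^ m)
    (E : Finset (Finset V)) (hE : ∀ e ∈ E, e.card = k)
    (X : Fin k → Finset V) (hX : ∀ i j : Fin k, i ≠ j → Disjoint (X i) (X j))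
    {Ω : Type*} [MeasurableSpace Ω] (μ : Measure Ω) [IsProbabilityMeasure μ]
    (B : Fin k → Fin (k * Nat.log 2 n + 1) → V → Set Ω)
    (hBmeas : ∀ i j v, MeasurableSet (B i j v))
    (hBindep : iIndepSet
      (fun p : Fin k × Fin (k * Nat.log 2 n + 1) × V => B p.1 p.2.1 p.2.2) μ)
    (hBprob : ∀ i j v, μ (B i j v) = 1 / 2 ^ (j : ℕ))
    (hsmall : ((E.filter (fun e => ∀ i : Fin k, (e ∩ X i).card = 1)).card : ℝ) <
      (M : ℝ) * ((8 * (k : ℝ) * (Nat.log 2 n : ℝ)) ^ k)⁻¹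
        / (2 * ((k : ℝ) * (Nat.log 2 n : ℝ)) ^ k)) :
    μ {ω | ∃ a : Fin k → Fin (k * Nat.log 2 n + 1),
        Nat.log 2 M ≤ ∑ i : Fin k, (a i : ℕ) ∧
        ∃ e ∈ E, ∀ i : Fin k,
          (e ∩ (X i).filter (fun v => ω ∈ B i (a i) v)).card = 1}
      ≤ ENNReal.ofReal (((8 * (k : ℝ) * (Nat.log 2 n : ℝ)) ^ k)⁻¹ / 2) :=
  stmt3_general n k M hk hn2 hMpow E hE X hX μ B hBindep hBprob hsmall
end

section
/- Let k ≥ 2 and let G be a k-hypergraph on n vertices, where n ≥ 2 is a power of two, let M be a positive power of two, and let X_1, …, X_k be disjoint subsets of V(G). Write H = G[X_1, …, X_k] and p_out = (8k·log₂ n)^{−k}. For each i ∈ [k] and each integer 0 ≤ j ≤ k·log₂ n, let Y_{i,j} ⊆ X_i be a random subset obtained by including each vertex of X_i independently with probability 2^{−j}, with all inclusion events (over all i, j and all vertices) mutually independent. Let A be the set of tuples (a_1, …, a_k) of integers with 0 ≤ a_i ≤ k·log₂ n for all i and a_1 + ⋯ + a_k ≥ log₂ M. If e(H) ≥ M, then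 the probability that there exists (a_1, …, a_k) ∈ A such that G[Y_{1,a_1}, …, Y_{k,a_k}] contains at least one edge is at least p_out. -/
/-!
Encode every edge of `H` as the tuple `f : Fin k → V` of its vertices in `X 0, …, X (k-1)`; there
are at least `2 ^ s` such tuples, `s = log₂ M`. Reveal the coordinates one at a time. Split the
tuples `T` by their vertex `v` in the current coordinate and sort the vertices dyadically by the
size of their fibre `T_v`: some class `C` of vertices with fibres of size `≈ 2 ^ t` (`t ≤ s`)
carries at least a `1 / (s + 1)` share of `T`. Take `W ⊆ C` of size `≈ min (#C) (2 ^ (s - t - 1))`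
and level `s - t` in this coordinate: with probability at least `1 / (4 (L + 1))` exactly one vertex
`v ∈ W` survives, and since this event is independent of the remaining coordinates, induction on
the fibre `T_v` with target `t` contributes a further factor `(4 (L + 1)) ^ (-(k - 1))`.
With `L = k log₂ n ≥ 1` the bound `(4 (L + 1)) ^ (-k)` is at least `(8 k log₂ n) ^ (-k)`.
-/

open MeasureTheory ProbabilityTheory Classical
open Finset Function
open scoped ENNReal

theorem Finset.exists_subset_two_mul_card_sub_one_le {V : Type*} (C : Finset V) {x r : ℕ}
    (hr : 2 ≤ r) (hxC : x ≤ r * #C) : ∃ W ⊆ C, 2 * (#W - 1) ≤ x ∧ x ≤ r * #W := by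
  obtain ⟨W, hWC, hW⟩ := exists_subset_card_eq (min_le_left #C ((x + 1) / 2))
  refine ⟨W, hWC, by omega, ?_⟩
  rcases min_choice #C ((x + 1) / 2) with h | h
  · rwa [hW, h]
  · rw [hW, h]
    nlinarith [Nat.div_add_mod (x + 1) 2, Nat.mod_lt (x + 1) two_pos]

theorem exists_dyadic_class {V : Type*} {D : Finset V} {d : V → ℕ} {s : ℕ}
    (hd : 2 ^ s ≤ ∑ v ∈ D, d v) :
    ∃ t ≤ s, ∃ C : Finset V, (∀ v ∈ C, 2 ^ t ≤ d v) ∧ 2 ^ (s - t) ≤ 2 * (s + 1) * #C := by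
  set level : V → ℕ := fun v => min (Nat.log 2 (d v)) s
  have hmaps : ∀ v ∈ {v ∈ D | d v ≠ 0}, level v ∈ range (s + 1) := fun v _ =>
    mem_range.mpr (Nat.lt_succ_of_le (min_le_right _ _))
  obtain ⟨t, ht, hbig⟩ := exists_le_sum_fiber_of_maps_to_of_nsmul_le_sum hmaps
    nonempty_range_add_one (w := fun v => (s + 1) * d v) (b := 2 ^ s)
    (by rw [← mul_sum, sum_filter_ne_zero, card_range, smul_eq_mul]; gcongr)
  have hts : t ≤ s := Nat.le_of_lt_succ (mem_range.mp ht)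
  set C : Finset V := {v ∈ D | d v ≠ 0 ∧ level v = t}
  have hC_sum : 2 ^ s ≤ (s + 1) * ∑ v ∈ C, d v := by
    rw [mul_sum]
    simpa only [filter_filter] using hbig
  have hC_lower : ∀ v ∈ C, 2 ^ t ≤ d v := by
    intro v hv
    obtain ⟨hv0, hvt⟩ := (mem_filter.mp hv).2
    calc 2 ^ t ≤ 2 ^ Nat.log 2 (d v) := Nat.pow_le_pow_right two_pos (hvt ▸ min_le_left _ _)
      _ ≤ d v := Nat.pow_log_le_self 2 hv0
  refine ⟨t, hts, C, hC_lower, ?_⟩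
  rcases hts.lt_or_eq with hlt | rfl
  · have hC_upper : ∀ v ∈ C, d v ≤ 2 ^ (t + 1) := by
      intro v hv
      obtain ⟨-, hvt⟩ := (mem_filter.mp hv).2
      have : Nat.log 2 (d v) = t := by simp only [level] at hvt; omega
      exact this ▸ (Nat.lt_pow_succ_log_self one_lt_two _).le
    refine Nat.le_of_mul_le_mul_left ?_ (Nat.two_pow_pos t)
    calc 2 ^ t * 2 ^ (s - t) = 2 ^ s := by rw [← pow_add, Nat.add_sub_cancel' hlt.le]
      _ ≤ (s + 1) * ∑ v ∈ C, d v := hC_sum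
      _ ≤ (s + 1) * (#C * 2 ^ (t + 1)) := by
          gcongr
          simpa only [smul_eq_mul] using sum_le_card_nsmul _ _ _ hC_upper
      _ = 2 ^ t * (2 * (s + 1) * #C) := by ring
  · have hC_ne : C.Nonempty := by
      by_contra hC
      rw [not_nonempty_iff_eq_empty.mp hC, sum_empty, mul_zero] at hC_sum
      exact (Nat.two_pow_pos t).not_ge hC_sum
    rw [Nat.sub_self, pow_zero]
    exact Nat.mul_pos (by positivity) hC_ne.card_pos

theorem inv_four_mul_le_mul_one_sub_pow {L A w : ℕ} (hw_le : 2 * (w - 1) ≤ 2 ^ A)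
    (hw_ge : 2 ^ A ≤ 2 * (L + 1) * w) :
    (4 * ((L : ℝ) + 1))⁻¹ ≤ w * ((2 ^ A)⁻¹ * (1 - (2 ^ A)⁻¹) ^ (w - 1)) := by
  set x : ℝ := (2 ^ A)⁻¹
  have hx0 : 0 < x := by positivity
  have hx1 : x ≤ 1 := inv_le_one_of_one_le₀ (one_le_pow₀ one_le_two)
  have hxA : (2 : ℝ) ^ A * x = 1 := mul_inv_cancel₀ (by positivity)
  have hw_le' : ((w - 1 : ℕ) : ℝ) * x ≤ 1 / 2 := by
    have : (2 : ℝ) * (w - 1 : ℕ) ≤ 2 ^ A := by exact_mod_cast hw_le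
    nlinarith
  have hw_ge' : (2 * ((L : ℝ) + 1))⁻¹ ≤ w * x := by
    have : (2 : ℝ) ^ A ≤ 2 * (L + 1) * w := by exact_mod_cast hw_ge
    rw [inv_le_iff_one_le_mul₀ (by positivity)]
    nlinarith
  have bernoulli : 1 / 2 ≤ (1 - x) ^ (w - 1) := by
    have := one_add_mul_le_pow (a := -x) (by linarith) (w - 1)
    rw [← sub_eq_add_neg] at this
    linarith
  calc (4 * ((L : ℝ) + 1))⁻¹ = (2 * ((L : ℝ) + 1))⁻¹ * (1 / 2) := by
        rw [one_div, ← mul_inv]; ring_nf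
    _ ≤ (w * x) * (1 - x) ^ (w - 1) := by gcongr
    _ = _ := mul_assoc _ _ _

theorem ENNReal.inv_four_mul_le_mul_one_sub_pow {L A w : ℕ} (hw_le : 2 * (w - 1) ≤ 2 ^ A)
    (hw_ge : 2 ^ A ≤ 2 * (L + 1) * w) :
    ((4 * (L + 1) : ℕ) : ℝ≥0∞)⁻¹ ≤ w * (1 / 2 ^ A * (1 - 1 / 2 ^ A) ^ (w - 1)) := by
  have h := _root_.inv_four_mul_le_mul_one_sub_pow hw_le hw_ge
  rw [← ENNReal.toReal_le_toReal (by simp) (by finiteness)]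
  convert h using 1
  · rw [ENNReal.toReal_inv, ENNReal.toReal_natCast]
    push_cast
    rfl
  · rw [ENNReal.toReal_mul, ENNReal.toReal_mul, ENNReal.toReal_pow,
      ENNReal.toReal_sub_of_le (by simpa using one_le_pow₀ one_le_two) (by simp)]
    simp

theorem ProbabilityTheory.iIndepSet.measure_inter_biInter_compl {Ω ι : Type*}
    [MeasurableSpace Ω] {μ : Measure Ω} [IsProbabilityMeasure μ] [DecidableEq ι]
    {s : ι → Set Ω} (hs : iIndepSet s μ) (hsm : ∀ i, MeasurableSet (s i))
    {i : ι} {J : Finset ι} (hi : i ∉ J) :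
    μ (s i ∩ ⋂ j ∈ J, (s j)ᶜ) = μ (s i) * ∏ j ∈ J, (1 - μ (s j)) := by
  set f : ι → Set Ω := fun j => if j = i then s i else (s j)ᶜ
  have hf : ∀ j ∈ J, f j = (s j)ᶜ := fun j hj => if_neg (ne_of_mem_of_not_mem hj hi)
  have hf_meas : ∀ j ∈ insert i J, MeasurableSet[MeasurableSpace.generateFrom {s j}] (f j) := by
    intro j _
    have hj := MeasurableSpace.measurableSet_generateFrom (Set.mem_singleton (s j))
    by_cases hji : j = i
    · subst hji; simpa [f] using hj
    · simpa [f, hji] using hj.compl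
  have key : s i ∩ ⋂ j ∈ J, (s j)ᶜ = ⋂ j ∈ insert i J, f j := by
    rw [set_biInter_insert, Set.iInter₂_congr (fun j hj => (hf j hj).symm)]
    simp [f]
  rw [key, (iIndepSet_iff s μ).mp hs _ hf_meas, prod_insert hi, prod_congr rfl fun j hj => by
    rw [hf j hj, prob_compl_eq_one_sub (hsm j)]]
  simp [f]

section Survival

variable {Ω V κ : Type*} {L : ℕ}

def survivalEvent (B : κ → Fin (L + 1) → V → Set Ω) (I : Finset κ) (s : ℕ)
    (T : Finset (κ → V)) : Set Ω :=
  {ω | ∃ a : κ → Fin (L + 1), s ≤ ∑ i ∈ I, (a i : ℕ) ∧ ∃ f ∈ T, ∀ i ∈ I, ω ∈ B i (a i) (f i)}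

abbrev coordMeasurableSpace (B : κ → Fin (L + 1) → V → Set Ω) (I : Set κ) : MeasurableSpace Ω :=
  MeasurableSpace.generateFrom
    {t | ∃ p ∈ {p : κ × Fin (L + 1) × V | p.1 ∈ I}, B p.1 p.2.1 p.2.2 = t}

variable {B : κ → Fin (L + 1) → V → Set Ω}

theorem coordMeasurableSpace_le [MeasurableSpace Ω] (hB : ∀ i j v, MeasurableSet (B i j v))
    (I : Set κ) :
    coordMeasurableSpace B I ≤ ‹MeasurableSpace Ω› :=
  MeasurableSpace.generateFrom_le fun _ ⟨_, _, hp⟩ => hp ▸ hB _ _ _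

theorem measurableSet_coordMeasurableSpace {I : Set κ} {i : κ} (hi : i ∈ I) (j : Fin (L + 1))
    (v : V) : MeasurableSet[coordMeasurableSpace B I] (B i j v) :=
  MeasurableSpace.measurableSet_generateFrom ⟨(i, j, v), hi, rfl⟩

theorem survivalEvent_eq_iUnion (I : Finset κ) (s : ℕ) (T : Finset (κ → V)) :
    survivalEvent B I s T =
      ⋃ (a : κ → Fin (L + 1)) (_ : s ≤ ∑ i ∈ I, (a i : ℕ)), ⋃ f ∈ T, ⋂ i ∈ I, B i (a i) (f i) := by
  ext ω
  simp [survivalEvent]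

theorem measurableSet_survivalEvent [Finite κ] (I : Finset κ) (s : ℕ) (T : Finset (κ → V)) :
    MeasurableSet[coordMeasurableSpace B I] (survivalEvent B I s T) := by
  rw [survivalEvent_eq_iUnion]
  exact .iUnion fun a => .iUnion fun _ => T.measurableSet_biUnion fun f _ =>
    I.measurableSet_biInter fun i hi => measurableSet_coordMeasurableSpace hi _ _

theorem indep_coordMeasurableSpace [MeasurableSpace Ω] {μ : Measure Ω}
    (hB : ∀ i j v, MeasurableSet (B i j v))
    (hind : iIndepSet (fun p : κ × Fin (L + 1) × V => B p.1 p.2.1 p.2.2) μ) {I J : Set κ}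
    (hIJ : Disjoint I J) : Indep (coordMeasurableSpace B I) (coordMeasurableSpace B J) μ :=
  hind.indep_generateFrom_of_disjoint (fun _ => hB _ _ _) _ _ (hIJ.preimage Prod.fst)

theorem inter_survivalEvent_subset [DecidableEq κ] [DecidableEq V] {i₀ : κ} {I : Finset κ}
    (hi₀ : i₀ ∉ I) {a₀ : Fin (L + 1)} {v : V} {s t : ℕ} (hst : s ≤ a₀ + t)
    (T : Finset (κ → V)) :
    B i₀ a₀ v ∩ survivalEvent B I t {f ∈ T | f i₀ = v} ⊆ survivalEvent B (insert i₀ I) s T := by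
  rintro ω ⟨hω₀, a, ha, f, hf, hωf⟩
  obtain ⟨hfT, rfl⟩ := mem_filter.mp hf
  refine ⟨update a i₀ a₀, ?_, f, hfT, ?_⟩
  · rw [sum_insert hi₀, update_self,
      sum_congr rfl fun i hi => by rw [update_of_ne (ne_of_mem_of_not_mem hi hi₀)]]
    omega
  · intro i hi
    rcases mem_insert.mp hi with rfl | hi
    · rwa [update_self]
    · rw [update_of_ne (ne_of_mem_of_not_mem hi hi₀)]
      exact hωf i hi

theorem card_mul_le_measure_survivalEvent_insert [MeasurableSpace Ω] [Finite κ] [DecidableEq κ]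
    [DecidableEq V] {μ : Measure Ω} [IsProbabilityMeasure μ]
    (hB : ∀ i j v, MeasurableSet (B i j v))
    (hind : iIndepSet (fun p : κ × Fin (L + 1) × V => B p.1 p.2.1 p.2.2) μ)
    {i₀ : κ} {I : Finset κ} (hi₀ : i₀ ∉ I) {a₀ : Fin (L + 1)} {p : ℝ≥0∞}
    (hp : ∀ v, μ (B i₀ a₀ v) = p) {s t : ℕ} (hst : s ≤ a₀ + t) (T : Finset (κ → V))
    (W : Finset V) {q : ℝ≥0∞}
    (hq : ∀ v ∈ W, q ≤ μ (survivalEvent B I t {f ∈ T | f i₀ = v})) :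
    #W * (p * (1 - p) ^ (#W - 1)) * q ≤ μ (survivalEvent B (insert i₀ I) s T) := by
  set Y : V → Set Ω := fun v => B i₀ a₀ v
  set X : V → Set Ω := fun v => Y v ∩ ⋂ v' ∈ W.erase v, (Y v')ᶜ
  set Z : V → Set Ω := fun v => survivalEvent B I t {f ∈ T | f i₀ = v}
  have hY : iIndepSet Y μ :=
    hind.precomp (g := fun v => (i₀, a₀, v))
      ((Prod.mk_right_injective i₀).comp (Prod.mk_right_injective a₀))
  have hX : ∀ v ∈ W, μ (X v) = p * (1 - p) ^ (#W - 1) := by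
    intro v hv
    rw [hY.measure_inter_biInter_compl (fun _ => hB _ _ _) (notMem_erase v W)]
    simp [Y, hp, card_erase_of_mem hv]
  have hY_meas : ∀ v, MeasurableSet[coordMeasurableSpace B {i₀}] (Y v) := fun v =>
    measurableSet_coordMeasurableSpace (Set.mem_singleton i₀) a₀ v
  have hX_meas : ∀ v, MeasurableSet[coordMeasurableSpace B {i₀}] (X v) := fun v =>
    (hY_meas v).inter <| Finset.measurableSet_biInter _ fun v' _ => (hY_meas v').compl
  have hZ_meas : ∀ v, MeasurableSet[coordMeasurableSpace B I] (Z v) := fun v =>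
    measurableSet_survivalEvent _ _ _
  have hXZ : ∀ v, μ (X v ∩ Z v) = μ (X v) * μ (Z v) := fun v =>
    (Indep_iff _ _ μ).mp
      (indep_coordMeasurableSpace hB hind (Set.disjoint_singleton_left.mpr hi₀))
      _ _ (hX_meas v) (hZ_meas v)
  have hdisj : (W : Set V).PairwiseDisjoint fun v => X v ∩ Z v := by
    intro u hu v hv huv
    refine Set.disjoint_left.mpr fun ω hωu hωv => ?_
    exact Set.mem_iInter₂.mp hωv.1.2 u (mem_erase.mpr ⟨huv, hu⟩) hωu.1.1
  calc #W * (p * (1 - p) ^ (#W - 1)) * q = ∑ v ∈ W, p * (1 - p) ^ (#W - 1) * q := by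
        rw [sum_const, nsmul_eq_mul, mul_assoc]
    _ ≤ ∑ v ∈ W, μ (X v ∩ Z v) := sum_le_sum fun v hv => by
        rw [hXZ, hX v hv]
        gcongr
        exact hq v hv
    _ = μ (⋃ v ∈ W, X v ∩ Z v) := (measure_biUnion_finset hdisj fun v _ =>
        (coordMeasurableSpace_le hB _ _ (hX_meas v)).inter
          (coordMeasurableSpace_le hB _ _ (hZ_meas v))).symm
    _ ≤ μ (survivalEvent B (insert i₀ I) s T) := measure_mono <| Set.iUnion₂_subset fun v _ =>
        (Set.inter_subset_inter_left _ Set.inter_subset_left).trans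
          (inter_survivalEvent_subset hi₀ hst T)

theorem inv_pow_le_measure_survivalEvent [MeasurableSpace Ω] [Finite κ] [DecidableEq κ]
    [DecidableEq V] {μ : Measure Ω} [IsProbabilityMeasure μ]
    (hB : ∀ i j v, MeasurableSet (B i j v))
    (hind : iIndepSet (fun p : κ × Fin (L + 1) × V => B p.1 p.2.1 p.2.2) μ)
    (hprob : ∀ i j v, μ (B i j v) = 1 / 2 ^ (j : ℕ)) (I : Finset κ) {s : ℕ} (hs : s ≤ L)
    {T : Finset (κ → V)} (hT : 2 ^ s ≤ #T) (hagree : ∀ f ∈ T, ∀ g ∈ T, ∀ i ∉ I, f i = g i) :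
    ((4 * (L + 1) : ℕ) : ℝ≥0∞)⁻¹ ^ #I ≤ μ (survivalEvent B I s T) := by
  induction I using Finset.induction_on generalizing s T with
  | empty =>
    have hT1 : #T ≤ 1 := card_le_one.mpr fun f hf g hg =>
      funext fun i => hagree f hf g hg i (notMem_empty i)
    have hs0 : s = 0 := by
      by_contra h
      have := Nat.one_lt_two_pow_iff.mpr h
      omega
    obtain ⟨f, hf⟩ : T.Nonempty := card_pos.mp (by have := Nat.one_le_two_pow (n := s); omega)
    rw [card_empty, pow_zero, ← measure_univ (μ := μ)]
    exact measure_mono fun ω _ => ⟨fun _ => 0, by simp [hs0], f, hf, by simp⟩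
  | @insert i₀ I hi₀ ih =>
    set fiber : V → Finset (κ → V) := fun v => {f ∈ T | f i₀ = v}
    obtain ⟨t, hts, C, hC_fiber, hC_card⟩ :=
      exists_dyadic_class (D := T.image (· i₀)) (d := fun v => #(fiber v))
        (by rwa [← card_eq_sum_card_image])
    obtain ⟨W, hWC, hW_le, hW_ge⟩ := C.exists_subset_two_mul_card_sub_one_le
      (r := 2 * (L + 1)) (by omega) (hC_card.trans (by gcongr))
    have hfiber : ∀ v ∈ W, ((4 * (L + 1) : ℕ) : ℝ≥0∞)⁻¹ ^ #I ≤
        μ (survivalEvent B I t (fiber v)) := by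
      refine fun v hv => ih (hts.trans hs) (hC_fiber v (hWC hv)) fun f hf g hg i hi => ?_
      obtain ⟨hfT, rfl⟩ := mem_filter.mp hf
      obtain ⟨hgT, hgv⟩ := mem_filter.mp hg
      by_cases hii₀ : i = i₀
      · rw [hii₀, hgv]
      · exact hagree f hfT g hgT i (by simp [hii₀, hi])
    have hstep := card_mul_le_measure_survivalEvent_insert hB hind hi₀
      (s := s) (a₀ := ⟨s - t, by omega⟩) (fun v => hprob i₀ _ v) (by simp; omega) T W hfiber
    rw [card_insert_of_notMem hi₀, pow_succ']
    calc _ ≤ #W * (1 / 2 ^ (s - t) * (1 - 1 / 2 ^ (s - t)) ^ (#W - 1)) *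
          ((4 * (L + 1) : ℕ) : ℝ≥0∞)⁻¹ ^ #I := by
          gcongr
          exact ENNReal.inv_four_mul_le_mul_one_sub_pow hW_le hW_ge
      _ ≤ _ := hstep

end Survival

section Transversal

variable {ι V : Type*} {X : ι → Finset V}

theorem injective_of_mem_of_pairwise_disjoint (hX : Pairwise (Disjoint on X)) {f : ι → V}
    (hf : ∀ i, f i ∈ X i) : Injective f := fun i j hij => by
  by_contra hne
  exact disjoint_left.mp (hX hne) (hf i) (hij ▸ hf j)

variable [Fintype ι] [DecidableEq V]

theorem image_inter_eq_singleton (hX : Pairwise (Disjoint on X)) {f : ι → V}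
    (hf : ∀ i, f i ∈ X i) (i : ι) : univ.image f ∩ X i = {f i} := by
  ext v
  simp only [mem_inter, mem_image, mem_univ, true_and, mem_singleton]
  constructor
  · rintro ⟨⟨j, rfl⟩, hj⟩
    rw [injective_of_mem_of_pairwise_disjoint hX hf |>.eq_iff]
    by_contra hji
    exact disjoint_left.mp (hX hji) (hf j) hj
  · rintro rfl
    exact ⟨⟨i, rfl⟩, hf i⟩

theorem exists_eq_image_of_card_inter_eq_one (hX : Pairwise (Disjoint on X)) {e : Finset V}
    (he : #e = Fintype.card ι) (he_one : ∀ i, #(e ∩ X i) = 1) :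
    ∃ f : ι → V, (∀ i, f i ∈ X i) ∧ univ.image f = e := by
  choose f hf using fun i => card_pos.mp ((he_one i).symm ▸ one_pos : 0 < #(e ∩ X i))
  have hfX : ∀ i, f i ∈ X i := fun i => (mem_inter.mp (hf i)).2
  refine ⟨f, hfX, eq_of_subset_of_card_le ?_ ?_⟩
  · exact image_subset_iff.mpr fun i _ => (mem_inter.mp (hf i)).1
  · rw [card_image_of_injective _ (injective_of_mem_of_pairwise_disjoint hX hfX), he, card_univ]

variable [Fintype V] [DecidableEq ι]

def transversals (E : Finset (Finset V)) (X : ι → Finset V) : Finset (ι → V) :=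
  {f | (∀ i, f i ∈ X i) ∧ univ.image f ∈ E}

theorem card_filter_le_card_transversals (hX : Pairwise (Disjoint on X)) {E : Finset (Finset V)}
    [DecidablePred fun e : Finset V => ∀ i, #(e ∩ X i) = 1] (hE : ∀ e ∈ E, #e = Fintype.card ι) :
    #{e ∈ E | ∀ i, #(e ∩ X i) = 1} ≤ #(transversals E X) :=
  card_le_card_of_surjOn (fun f => univ.image f) fun e he => by
    obtain ⟨heE, he_one⟩ := mem_filter.mp he
    obtain ⟨f, hfX, rfl⟩ := exists_eq_image_of_card_inter_eq_one hX (hE e heE) he_one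
    exact ⟨f, by simp [transversals, hfX, heE], rfl⟩

theorem survivalEvent_transversals_subset {Ω : Type*} {L : ℕ} {B : ι → Fin (L + 1) → V → Set Ω}
    (hX : Pairwise (Disjoint on X)) (E : Finset (Finset V)) (s : ℕ) :
    survivalEvent B univ s (transversals E X) ⊆
      {ω | ∃ a : ι → Fin (L + 1), s ≤ ∑ i, (a i : ℕ) ∧
        ∃ e ∈ E, ∀ i, #(e ∩ (X i).filter (fun v => ω ∈ B i (a i) v)) = 1} := by
  rintro ω ⟨a, ha, f, hf, hωf⟩
  obtain ⟨hfX, hfE⟩ := (mem_filter.mp hf).2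
  refine ⟨a, ha, univ.image f, hfE, fun i => ?_⟩
  rw [inter_filter, image_inter_eq_singleton hX hfX i, filter_singleton,
    if_pos (hωf i (mem_univ i)), card_singleton]

end Transversal

theorem ENNReal.ofReal_inv_pow_le_inv_pow {x : ℝ} {N : ℕ} (hN : 0 < N) (hNx : N ≤ x) (k : ℕ) :
    ENNReal.ofReal ((x ^ k)⁻¹) ≤ ((N : ℝ≥0∞)⁻¹) ^ k := by
  have hx : 0 < x := lt_of_lt_of_le (by exact_mod_cast hN) hNx
  rw [← inv_pow, ENNReal.ofReal_pow (inv_nonneg.mpr hx.le), ENNReal.ofReal_inv_of_pos hx]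
  gcongr
  rw [← ENNReal.ofReal_natCast]
  exact ENNReal.ofReal_le_ofReal hNx

/-- Completeness of `VerifyGuess` (Lemma 4.1): `G` is a `k`-hypergraph on `n` vertices
(`n ≥ 2` a power of two), `M` a positive power of two, `X_1,…,X_k` disjoint vertex subsets,
`H = G[X_1,…,X_k]`, and `Y_{i,j} ⊆ X_i` random subsets keeping each vertex independently
with probability `2^{-j}` (for `0 ≤ j ≤ k·log₂ n`, all inclusion events independent).
If `e(H) ≥ M`, then with `p_out = (8k·log₂ n)^{-k}` the probability
that some admissible tuple `(a_1,…,a_k)` (entries in `[0, k·log₂ n]`, sum at least `log₂ M`)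
yields an edge in `G[Y_{1,a_1},…,Y_{k,a_k}]` is at least `p_out`. -/
theorem stmt4 {V : Type*} [Fintype V] [DecidableEq V]
    (n k M : ℕ) (hk : 2 ≤ k) (hn : Fintype.card V = n) (hn2 : 2 ≤ n)
    (hnpow : ∃ m : ℕ, n = 2 ^ m) (hMpow : ∃ m : ℕ, M = 2 ^ m)
    (E : Finset (Finset V)) (hE : ∀ e ∈ E, e.card = k)
    (X : Fin k → Finset V) (hX : ∀ i j : Fin k, i ≠ j → Disjoint (X i) (X j))
    {Ω : Type*} [MeasurableSpace Ω] (μ : Measure Ω) [IsProbabilityMeasure μ]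
    (B : Fin k → Fin (k * Nat.log 2 n + 1) → V → Set Ω)
    (hBmeas : ∀ i j v, MeasurableSet (B i j v))
    (hBindep : iIndepSet
      (fun p : Fin k × Fin (k * Nat.log 2 n + 1) × V => B p.1 p.2.1 p.2.2) μ)
    (hBprob : ∀ i j v, μ (B i j v) = 1 / 2 ^ (j : ℕ))
    (hbig : M ≤ (E.filter (fun e => ∀ i : Fin k, (e ∩ X i).card = 1)).card) :
    ENNReal.ofReal (((8 * (k : ℝ) * (Nat.log 2 n : ℝ)) ^ k)⁻¹) ≤
      μ {ω | ∃ a : Fin k → Fin (k * Nat.log 2 n + 1),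
        Nat.log 2 M ≤ ∑ i : Fin k, (a i : ℕ) ∧
        ∃ e ∈ E, ∀ i : Fin k,
          (e ∩ (X i).filter (fun v => ω ∈ B i (a i) v)).card = 1} := by
  set T : Finset (Fin k → V) := transversals E X
  have hT : M ≤ #T := hbig.trans <|
    card_filter_le_card_transversals hX fun e he => by rw [hE e he, Fintype.card_fin]
  have hlogM : 2 ^ Nat.log 2 M ≤ #T := (Nat.pow_log_le_self 2 (by
    obtain ⟨m, rfl⟩ := hMpow; positivity)).trans hT
  have hcard : Fintype.card (Fin k → V) = 2 ^ (k * Nat.log 2 n) := by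
    obtain ⟨m, hm⟩ := hnpow
    rw [Fintype.card_fun, Fintype.card_fin, hn, hm, Nat.log_pow one_lt_two, ← pow_mul, mul_comm]
  have hlogM_le : Nat.log 2 M ≤ k * Nat.log 2 n :=
    (Nat.pow_le_pow_iff_right one_lt_two).mp (hlogM.trans (hcard ▸ card_le_univ T))
  have hL : (1 : ℝ) ≤ k * Nat.log 2 n := by
    exact_mod_cast Nat.one_le_iff_ne_zero.mpr <|
      mul_ne_zero (by omega) (Nat.log_pos one_lt_two hn2).ne'
  calc ENNReal.ofReal (((8 * (k : ℝ) * (Nat.log 2 n : ℝ)) ^ k)⁻¹)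
      ≤ ((4 * (k * Nat.log 2 n + 1) : ℕ) : ℝ≥0∞)⁻¹ ^ #(univ : Finset (Fin k)) := by
        rw [card_univ, Fintype.card_fin]
        exact ENNReal.ofReal_inv_pow_le_inv_pow (by positivity) (by push_cast; linarith) k
    _ ≤ μ (survivalEvent B univ (Nat.log 2 M) T) :=
        inv_pow_le_measure_survivalEvent hBmeas hBindep hBprob univ hlogM_le hlogM
          fun _ _ _ _ i hi => absurd (mem_univ i) hi
    _ ≤ _ := measure_mono (survivalEvent_transversals_subset hX E _)
end

section
/- Let X be a finite set, let d : X → ℕ, and let K be a positive integer such that d(v) < 2^K for every v ∈ X and such that e := Σ_{v ∈ X} d(v) satisfies 1 ≤ e ≤ 2^K. Then there exists an integer a with 0 ≤ a ≤ K with the following property: if Y ⊆ X is a random subset obtained by including each element of X independently with probability 2^{−a}, then with probability at least 1/(8K), Y contains an element v with d(v) ≥ e/2^a. -/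
/-!
Every `v` with `d v ≠ 0` has a dyadic level `a ≤ K` with `e ≤ d v * 2 ^ a < 2 * e`. If for every
`a ≤ K` fewer than `2 ^ a / (4 K)` elements satisfied `e ≤ d v * 2 ^ a`, the elements of level `a`
would carry weight less than `e / (2 K)`, and the `K + 1` levels together less than `e`. So some
`a ≤ K` has `m ≥ 2 ^ a / (4 K)` heavy elements, and by independence `Y` misses all of them with
probability `(1 - 2⁻ᵃ) ^ m ≤ 1 / (1 + m 2⁻ᵃ) ≤ 4 K / (4 K + 1)`.
-/

open MeasureTheory ProbabilityTheory Finset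

theorem exists_le_mul_two_pow_lt_two_mul {d e : ℕ} (hd : 0 < d) (hde : d ≤ e) :
    ∃ a, e ≤ d * 2 ^ a ∧ d * 2 ^ a < 2 * e := by
  have hex : ∃ a, e ≤ d * 2 ^ a :=
    ⟨e, Nat.lt_two_pow_self.le.trans (Nat.le_mul_of_pos_left _ hd)⟩
  refine ⟨Nat.find hex, Nat.find_spec hex, ?_⟩
  cases h : Nat.find hex with
  | zero => omega
  | succ a =>
    have hmin : ¬ e ≤ d * 2 ^ a := Nat.find_min hex (h ▸ a.lt_succ_self)
    rw [pow_succ, ← mul_assoc]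
    omega

theorem exists_dyadic_level {ι : Type*} (X : Finset ι) (d : ι → ℕ) {K e : ℕ}
    (he : e = ∑ v ∈ X, d v) (he2 : e ≤ 2 ^ K) :
    ∃ f : ι → ℕ, ∀ v ∈ X, d v ≠ 0 → f v ≤ K ∧ e ≤ d v * 2 ^ f v ∧ d v * 2 ^ f v < 2 * e := by
  have hlevel : ∀ v, ∃ a, v ∈ X → d v ≠ 0 → e ≤ d v * 2 ^ a ∧ d v * 2 ^ a < 2 * e := by
    intro v
    by_cases hv : v ∈ X ∧ d v ≠ 0
    · obtain ⟨a, ha⟩ := exists_le_mul_two_pow_lt_two_mul (Nat.pos_of_ne_zero hv.2)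
        (he ▸ single_le_sum (fun _ _ => Nat.zero_le _) hv.1)
      exact ⟨a, fun _ _ => ha⟩
    · exact ⟨0, fun hvX hdv => absurd ⟨hvX, hdv⟩ hv⟩
  choose f hf using hlevel
  refine ⟨f, fun v hvX hdv => ⟨?_, hf v hvX hdv⟩⟩
  have : 2 ^ f v < 2 ^ (K + 1) :=
    calc 2 ^ f v ≤ d v * 2 ^ f v := Nat.le_mul_of_pos_left _ (Nat.pos_of_ne_zero hdv)
      _ < 2 * e := (hf v hvX hdv).2
      _ ≤ 2 ^ (K + 1) := by rw [pow_succ]; omega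
  exact Nat.lt_succ_iff.mp ((Nat.pow_lt_pow_iff_right (by norm_num)).mp this)

theorem exists_two_pow_le_mul_card_filter {ι : Type*} (X : Finset ι) (d : ι → ℕ) {K e : ℕ}
    (hK : 0 < K) (he : e = ∑ v ∈ X, d v) (he1 : 1 ≤ e) (he2 : e ≤ 2 ^ K) :
    ∃ a ≤ K, 2 ^ a ≤ 4 * K * #{v ∈ X | e ≤ d v * 2 ^ a} := by
  by_contra! hsparse
  obtain ⟨f, hf⟩ := exists_dyadic_level X d he he2
  set X' := {v ∈ X | d v ≠ 0}
  have hlevel_weight : ∀ a ≤ K, 4 * K * ∑ v ∈ X' with f v = a, d v < 2 * e := by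
    intro a ha
    have hsum : (∑ v ∈ X' with f v = a, d v) * 2 ^ a ≤
        #{v ∈ X | e ≤ d v * 2 ^ a} * (2 * e) := by
      have hsub : {v ∈ X' | f v = a} ⊆ {v ∈ X | e ≤ d v * 2 ^ a} := by
        intro v hv
        simp only [X', mem_filter] at hv ⊢
        exact ⟨hv.1.1, hv.2 ▸ (hf v hv.1.1 hv.1.2).2.1⟩
      rw [sum_mul]
      calc ∑ v ∈ X' with f v = a, d v * 2 ^ a ≤ #{v ∈ X' | f v = a} * (2 * e) := by
            refine sum_le_card_nsmul _ _ _ fun v hv => ?_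
            simp only [X', mem_filter] at hv
            exact hv.2 ▸ (hf v hv.1.1 hv.1.2).2.2.le
        _ ≤ _ := Nat.mul_le_mul_right _ (card_le_card hsub)
    refine Nat.lt_of_mul_lt_mul_right (a := 2 ^ a) ?_
    calc 4 * K * (∑ v ∈ X' with f v = a, d v) * 2 ^ a
        ≤ 4 * K * #{v ∈ X | e ≤ d v * 2 ^ a} * (2 * e) := by
          simpa only [mul_assoc] using Nat.mul_le_mul_left (4 * K) hsum
      _ < 2 ^ a * (2 * e) := Nat.mul_lt_mul_of_pos_right (hsparse a ha) (by omega)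
      _ = 2 * e * 2 ^ a := mul_comm _ _
  have hsum_levels : ∑ a ∈ range (K + 1), ∑ v ∈ X' with f v = a, d v = e := by
    rw [sum_fiberwise_of_maps_to fun v hv =>
      mem_range_succ_iff.mpr (hf v (mem_filter.mp hv).1 (mem_filter.mp hv).2).1, he]
    exact sum_filter_ne_zero X
  have : 4 * K * e < (K + 1) * (2 * e) :=
    calc 4 * K * e = ∑ a ∈ range (K + 1), 4 * K * ∑ v ∈ X' with f v = a, d v := by
          rw [← mul_sum, hsum_levels]
      _ < ∑ _a ∈ range (K + 1), 2 * e :=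
          sum_lt_sum_of_nonempty nonempty_range_add_one
            fun a ha => hlevel_weight a (mem_range_succ_iff.mp ha)
      _ = (K + 1) * (2 * e) := by rw [sum_const, card_range, smul_eq_mul]
  nlinarith

theorem ProbabilityTheory.iIndepSet.measureReal_biUnion {ι Ω : Type*} [MeasurableSpace Ω]
    {μ : Measure Ω} {s : ι → Set Ω} (h : iIndepSet s μ) (hs : ∀ i, MeasurableSet (s i))
    (S : Finset ι) : μ.real (⋃ i ∈ S, s i) = 1 - ∏ i ∈ S, (1 - μ.real (s i)) := by
  have := h.isProbabilityMeasure
  -- `s i` is the preimage of `{True}` under `(· ∈ s i)`, so the complements are independent too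
  have hcompl : μ (⋂ i ∈ S, (s i)ᶜ) = ∏ i ∈ S, μ (s i)ᶜ :=
    h.iIndep_comap_mem.meas_biInter fun i _ =>
      (MeasurableSet.compl ⟨{True}, trivial, by ext; simp⟩)
  have key : μ.real (⋃ i ∈ S, s i)ᶜ = ∏ i ∈ S, (1 - μ.real (s i)) := by
    rw [Set.compl_iUnion₂, measureReal_def, hcompl, ENNReal.toReal_prod]
    refine prod_congr rfl fun i _ => ?_
    rw [← measureReal_def, measureReal_compl (hs i), probReal_univ]
  rw [measureReal_compl (S.measurableSet_biUnion fun i _ => hs i), probReal_univ] at key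
  linarith

theorem one_sub_pow_mul_one_add_mul_le_one {p : ℝ} (hp0 : 0 ≤ p) (hp1 : p ≤ 1) (m : ℕ) :
    (1 - p) ^ m * (1 + m * p) ≤ 1 := by
  calc (1 - p) ^ m * (1 + m * p) ≤ Real.exp (-p) ^ m * Real.exp (m * p) := by
        gcongr
        · exact Real.one_sub_le_exp_neg p
        · linarith [Real.add_one_le_exp (m * p)]
    _ = 1 := by rw [← Real.exp_nat_mul, ← Real.exp_add]; ring_nf; exact Real.exp_zero

theorem one_div_eight_mul_le_one_sub_one_sub_pow {p : ℝ} {m K : ℕ} (hp0 : 0 ≤ p) (hp1 : p ≤ 1)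
    (hK : 0 < K) (hmp : 1 ≤ 4 * K * (m * p)) : 1 / (8 * (K : ℝ)) ≤ 1 - (1 - p) ^ m := by
  have hKR : (1 : ℝ) ≤ K := by exact_mod_cast hK
  have hx : 0 ≤ (m : ℝ) * p := by positivity
  have := one_sub_pow_mul_one_add_mul_le_one hp0 hp1 m
  rw [div_le_iff₀ (by positivity)]
  nlinarith

theorem stmt6_general {α : Type*} (X : Finset α) (d : α → ℕ) (K : ℕ) (hK : 0 < K)
    (e : ℕ) (he : e = ∑ v ∈ X, d v)
    (he1 : 1 ≤ e) (he2 : e ≤ 2 ^ K) :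
    ∃ a : ℕ, a ≤ K ∧
      ∀ (Ω : Type) [MeasurableSpace Ω] (μ : Measure Ω) [IsProbabilityMeasure μ]
        (B : α → Set Ω), (∀ v, MeasurableSet (B v)) →
        iIndepSet (fun v : {v // v ∈ X} => B v) μ →
        (∀ v ∈ X, μ (B v) = 1 / 2 ^ a) →
        ENNReal.ofReal (1 / (8 * (K : ℝ))) ≤
          μ {ω | ∃ v ∈ X, ω ∈ B v ∧ (e : ℝ) / 2 ^ a ≤ (d v : ℝ)} := by
  obtain ⟨a, haK, hdense⟩ := exists_two_pow_le_mul_card_filter X.attach (fun v => d v) hK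
    (he.trans (sum_attach X d).symm) he1 he2
  refine ⟨a, haK, fun Ω _ μ _ B hB hindep hprob => ?_⟩
  set S : Finset {v // v ∈ X} := {v ∈ X.attach | e ≤ d v * 2 ^ a}
  have hprobReal (v : {v // v ∈ X}) : μ.real (B v) = ((2 : ℝ) ^ a)⁻¹ := by
    simp [measureReal_def, hprob v v.2]
  calc ENNReal.ofReal (1 / (8 * (K : ℝ)))
      ≤ ENNReal.ofReal (1 - (1 - ((2 : ℝ) ^ a)⁻¹) ^ #S) := by
        refine ENNReal.ofReal_le_ofReal (one_div_eight_mul_le_one_sub_one_sub_pow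
          (by positivity) (inv_le_one_of_one_le₀ (one_le_pow₀ one_le_two)) hK ?_)
        rw [← mul_assoc, ← div_eq_mul_inv, le_div_iff₀ (by positivity), one_mul]
        exact_mod_cast hdense
    _ = μ (⋃ v ∈ S, B v) := by
        rw [← ofReal_measureReal (measure_ne_top _ _), hindep.measureReal_biUnion (fun v => hB v)]
        simp only [hprobReal, prod_const]
    _ ≤ μ {ω | ∃ v ∈ X, ω ∈ B v ∧ (e : ℝ) / 2 ^ a ≤ (d v : ℝ)} := by
        refine measure_mono fun ω hω => ?_
        obtain ⟨v, hvS, hωv⟩ := Set.mem_iUnion₂.mp hω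
        refine ⟨v, v.2, hωv, ?_⟩
        rw [div_le_iff₀ (by positivity)]
        exact_mod_cast (mem_filter.mp hvS).2

/-- Single-step hitting claim from Lemma 4.1: if all degrees are below `2^K` and the total
degree `e` satisfies `1 ≤ e ≤ 2^K`, then there is `0 ≤ a ≤ K` such that, whenever
`Y ⊆ X` includes each element independently with probability `2^{-a}` (events `{v ∈ Y}`
for `v ∈ X` mutually independent), with probability at least `1/(8K)` the set `Y` contains
an element `v` with `d(v) ≥ e/2^a`. -/
theorem stmt6 {α : Type*} (X : Finset α) (d : α → ℕ) (K : ℕ) (hK : 0 < K)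
    (hd : ∀ v ∈ X, d v < 2 ^ K) (e : ℕ) (he : e = ∑ v ∈ X, d v)
    (he1 : 1 ≤ e) (he2 : e ≤ 2 ^ K) :
    ∃ a : ℕ, a ≤ K ∧
      ∀ (Ω : Type) [MeasurableSpace Ω] (μ : Measure Ω) [IsProbabilityMeasure μ]
        (B : α → Set Ω), (∀ v, MeasurableSet (B v)) →
        iIndepSet (fun v : {v // v ∈ X} => B v) μ →
        (∀ v ∈ X, μ (B v) = 1 / 2 ^ a) →
        ENNReal.ofReal (1 / (8 * (K : ℝ))) ≤
          μ {ω | ∃ v ∈ X, ω ∈ B v ∧ (e : ℝ) / 2 ^ a ≤ (d v : ℝ)} :=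
  stmt6_general X d K hK e he he1 he2
end

section
/- Let k ≥ 3 be an integer. Define integers c_1, …, c_k by c_i = (k+1)^{i−1} for 1 ≤ i ≤ k−1 and c_k = −Σ_{i=1}^{k−1} (k+1)^{i−1}. Suppose i_1, …, i_k ∈ [k] and z_1, …, z_k ∈ ℤ satisfy Σ_{j=1}^{k} ( (k+1)^k · z_j + c_{i_j} ) = 0. Then the multiset {i_1, …, i_k} equals {1, 2, …, k} (i.e., (i_1, …, i_k) is a permutation of (1, …, k)) and Σ_{j=1}^{k} z_j = 0. -/
/-!
Write `q = k + 1`. The colour offsets are at most `q ^ (k - 1)` in absolute value, so the `k`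
offsets in the sum add up to less than `q ^ k` in absolute value; being divisible by `q ^ k`,
their sum vanishes, and then so does `∑ z_j`. If colour `i` is used `m_i ≤ k < q` times, the
vanishing of the offset sum says `∑_{i < k-1} (m_i - m_{k-1}) q ^ i = 0`, and uniqueness of
base-`q` expansions with digits in `(-q, q)` forces all `m_i` to be equal, hence all equal to `1`.
-/

open Finset

theorem eq_zero_of_sum_mul_pow_eq_zero {b : ℤ} :
    ∀ {n : ℕ} {d : Fin n → ℤ}, (∀ i, |d i| < b) → ∑ i, d i * b ^ (i : ℕ) = 0 → ∀ i, d i = 0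
  | 0, _, _, _ => fun i => i.elim0
  | n + 1, d, hd, h => by
    have hb : b ≠ 0 := (lt_of_le_of_lt (abs_nonneg _) (hd 0)).ne'
    rw [Fin.sum_univ_succ] at h
    simp only [Fin.val_zero, pow_zero, mul_one, Fin.val_succ, pow_succ, ← mul_assoc,
      ← sum_mul] at h
    have h0 : d 0 = 0 :=
      Int.eq_zero_of_abs_lt_dvd ⟨-∑ i : Fin n, d i.succ * b ^ (i : ℕ), by linarith⟩ (hd 0)
    have htail : ∑ i : Fin n, d i.succ * b ^ (i : ℕ) = 0 := by
      rw [h0, zero_add] at h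
      exact (mul_eq_zero.1 h).resolve_right hb
    exact Fin.cases h0 (eq_zero_of_sum_mul_pow_eq_zero (fun i => hd i.succ) htail)

theorem Function.surjective_of_card_fiber_eq {α β : Type*} [Fintype α] [Nonempty α]
    [DecidableEq β] {f : α → β} (h : ∀ b b', #{a | f a = b} = #{a | f a = b'}) :
    Function.Surjective f := by
  intro b
  obtain ⟨a⟩ := ‹Nonempty α›
  have hpos : 0 < #{x | f x = b} := h (f a) b ▸ card_pos.2 ⟨a, by simp⟩
  obtain ⟨x, hx⟩ := card_pos.1 hpos
  exact ⟨x, (mem_filter.1 hx).2⟩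

/-- The paper's `c_{i+1}` for `k = n + 1` colours and base `q = k + 1`. -/
def colourOffset (q : ℤ) (n : ℕ) : Fin (n + 1) → ℤ :=
  Fin.lastCases (-∑ i : Fin n, q ^ (i : ℕ)) fun i => q ^ (i : ℕ)

section colourOffset

variable {q : ℤ} {n : ℕ}

@[simp]
theorem colourOffset_castSucc (i : Fin n) : colourOffset q n i.castSucc = q ^ (i : ℕ) :=
  Fin.lastCases_castSucc i

@[simp]
theorem colourOffset_last : colourOffset q n (Fin.last n) = -∑ i : Fin n, q ^ (i : ℕ) :=
  Fin.lastCases_last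

theorem abs_colourOffset_le (hq : 2 ≤ q) (i : Fin (n + 1)) : |colourOffset q n i| ≤ q ^ n := by
  induction i using Fin.lastCases with
  | last =>
    have hgeom := geom_sum_mul q n
    have hnonneg : 0 ≤ ∑ i ∈ range n, q ^ i := sum_nonneg fun i _ => by positivity
    rw [colourOffset_last, abs_neg, Fin.sum_univ_eq_sum_range (q ^ ·), abs_of_nonneg hnonneg]
    nlinarith
  | cast i =>
    rw [colourOffset_castSucc, abs_of_nonneg (by positivity)]
    exact pow_le_pow_right₀ (by linarith) i.is_lt.le

theorem sum_mul_colourOffset (m : Fin (n + 1) → ℤ) :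
    ∑ i, m i * colourOffset q n i = ∑ i : Fin n, (m i.castSucc - m (Fin.last n)) * q ^ (i : ℕ) := by
  simp only [Fin.sum_univ_castSucc, colourOffset_castSucc, colourOffset_last, mul_neg, mul_sum,
    ← sub_eq_add_neg, ← sum_sub_distrib, sub_mul]

theorem eq_last_of_sum_mul_colourOffset_eq_zero {m : Fin (n + 1) → ℤ}
    (hm : ∀ i, 0 ≤ m i ∧ m i < q) (h : ∑ i, m i * colourOffset q n i = 0) (i : Fin (n + 1)) :
    m i = m (Fin.last n) := by
  rw [sum_mul_colourOffset] at h
  have hdigit (i : Fin n) : |m i.castSucc - m (Fin.last n)| < q :=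
    abs_sub_lt_iff.2 ⟨by linarith [(hm i.castSucc).2, (hm (Fin.last n)).1],
      by linarith [(hm i.castSucc).1, (hm (Fin.last n)).2]⟩
  have hdigits := eq_zero_of_sum_mul_pow_eq_zero hdigit h
  induction i using Fin.lastCases with
  | last => rfl
  | cast i => exact sub_eq_zero.1 (hdigits i)

theorem abs_sum_colourOffset_comp_lt (hq : (n : ℤ) + 1 < q) (idx : Fin (n + 1) → Fin (n + 1)) :
    |∑ j, colourOffset q n (idx j)| < q ^ (n + 1) :=
  calc |∑ j, colourOffset q n (idx j)|
      ≤ ∑ j, |colourOffset q n (idx j)| := abs_sum_le_sum_abs _ _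
    _ ≤ ∑ _j : Fin (n + 1), q ^ n := sum_le_sum fun j _ => abs_colourOffset_le (by omega) _
    _ = ((n : ℤ) + 1) * q ^ n := by simp
    _ < q * q ^ n := mul_lt_mul_of_pos_right hq (pow_pos (by omega) n)
    _ = q ^ (n + 1) := (pow_succ' q n).symm

theorem bijective_and_sum_eq_zero_of_sum_colourOffset_eq_zero (hq : (n : ℤ) + 1 < q)
    (idx : Fin (n + 1) → Fin (n + 1)) (z : Fin (n + 1) → ℤ)
    (h : ∑ j, (q ^ (n + 1) * z j + colourOffset q n (idx j)) = 0) :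
    Function.Bijective idx ∧ ∑ j, z j = 0 := by
  rw [sum_add_distrib, ← mul_sum] at h
  have hoffsets : ∑ j, colourOffset q n (idx j) = 0 :=
    Int.eq_zero_of_abs_lt_dvd ⟨-∑ j, z j, by linarith⟩ (abs_sum_colourOffset_comp_lt hq idx)
  refine ⟨Finite.surjective_iff_bijective.1 ?_, ?_⟩
  · set m : Fin (n + 1) → ℤ := fun i => #{j | idx j = i}
    have hm : ∀ i, 0 ≤ m i ∧ m i < q := by
      intro i
      have hle := card_filter_le (univ : Finset (Fin (n + 1))) fun j => idx j = i
      rw [card_univ, Fintype.card_fin] at hle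
      exact ⟨by positivity, lt_of_le_of_lt (by simp only [m]; exact_mod_cast hle) hq⟩
    have hcount : ∑ i, m i * colourOffset q n i = 0 := by
      rw [← hoffsets, ← Finset.sum_fiberwise' univ idx]
      simp only [sum_const, nsmul_eq_mul, m]
    exact Function.surjective_of_card_fiber_eq fun i i' => Nat.cast_injective <|
      (eq_last_of_sum_mul_colourOffset_eq_zero hm hcount i).trans
        (eq_last_of_sum_mul_colourOffset_eq_zero hm hcount i').symm
  · rw [hoffsets, add_zero] at h
    exact (mul_eq_zero.1 h).resolve_left (pow_ne_zero _ (by omega))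

end colourOffset

theorem stmt10_general (k : ℕ) (c : Fin k → ℤ)
    (hc1 : ∀ i : Fin k, (i : ℕ) < k - 1 → c i = ((k : ℤ) + 1) ^ (i : ℕ))
    (hc2 : ∀ i : Fin k, (i : ℕ) = k - 1 →
      c i = -∑ j ∈ Finset.range (k - 1), ((k : ℤ) + 1) ^ j)
    (idx : Fin k → Fin k) (z : Fin k → ℤ)
    (hsum : ∑ j : Fin k, (((k : ℤ) + 1) ^ k * z j + c (idx j)) = 0) :
    Function.Bijective idx ∧ ∑ j : Fin k, z j = 0 := by
  obtain _ | n := k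
  · exact ⟨⟨Function.injective_of_subsingleton _, fun i => i.elim0⟩, by simp⟩
  have hc : c = colourOffset (((n + 1 : ℕ) : ℤ) + 1) n := by
    funext i
    induction i using Fin.lastCases with
    | last => rw [hc2 _ (by simp), colourOffset_last, Fin.sum_univ_eq_sum_range (_ ^ ·)]; simp
    | cast i => rw [hc1 _ (by simp), colourOffset_castSucc]; simp
  subst hc
  exact bijective_and_sum_eq_zero_of_sum_colourOffset_eq_zero (by push_cast; omega) idx z hsum

/-- Correctness of the folklore reduction from multicoloured k-SUM to k-SUM:
with `c_i = (k+1)^{i-1}` for `i ≤ k-1` (here 0-indexed: `c i = (k+1)^i` for `i < k-1`)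
and `c_k = -Σ_{i=1}^{k-1}(k+1)^{i-1}`, if
`Σ_j ((k+1)^k · z_j + c_{i_j}) = 0` then `(i_1,…,i_k)` is a permutation of `(1,…,k)`
and `Σ_j z_j = 0`. -/
theorem stmt10 (k : ℕ) (hk : 3 ≤ k) (c : Fin k → ℤ)
    (hc1 : ∀ i : Fin k, (i : ℕ) < k - 1 → c i = ((k : ℤ) + 1) ^ (i : ℕ))
    (hc2 : ∀ i : Fin k, (i : ℕ) = k - 1 →
      c i = -∑ j ∈ Finset.range (k - 1), ((k : ℤ) + 1) ^ j)
    (idx : Fin k → Fin k) (z : Fin k → ℤ)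
    (hsum : ∑ j : Fin k, (((k : ℤ) + 1) ^ k * z j + c (idx j)) = 0) :
    Function.Bijective idx ∧ ∑ j : Fin k, z j = 0 :=
  stmt10_general k c hc1 hc2 idx z hsum
end
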